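/- arXiv:2003.11813 — 10 statements merged into one kernel-verified Lean document; each statement's English description precedes it below -/
import Mathlib

section
/- Let e be a primitive ascent sequence of length n with k ascents, and partition e into maximal (strictly) decreasing runs; let t(e) be the sequence of minimal entries of these runs (which has length k+1). Then e avoids the vincular pattern 1̲2̲0 if and only if t(e) is non-decreasing. -/
open scoped Classical

/-- `e` is an inversion sequence (0-based indexing: `e i < i+1`, i.e. `e i ≤ i`). -/
def IsInvSeq (e : List ℕ) : Prop := ∀ i, i < e.length → e.getD i 0 ≤ i

/-- Number of ascents of `e`. -/
def ascents (e : List ℕ) : ℕ :=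
  ((List.range (e.length - 1)).filter (fun i => decide (e.getD i 0 < e.getD (i + 1) 0))).length

/-- `e` is an ascent sequence. -/
def IsAscSeq (e : List ℕ) : Prop :=
  IsInvSeq e ∧ ∀ i, i + 1 < e.length → e.getD (i + 1) 0 ≤ ascents (e.take (i + 1)) + 1

/-- `e` avoids the vincular pattern 12-0 : no indices `1 ≤ i < j < e.length`
(0-based) with `e j < e (i-1) < e i`. -/
def Avoids120 (e : List ℕ) : Prop :=
  ¬ ∃ i j, 1 ≤ i ∧ i < j ∧ j < e.length ∧
      e.getD j 0 < e.getD (i - 1) 0 ∧ e.getD (i - 1) 0 < e.getD i 0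

/-- `e` is primitive: no two equal consecutive entries. -/
def IsPrimitive (e : List ℕ) : Prop := ∀ i, i + 1 < e.length → e.getD i 0 ≠ e.getD (i + 1) 0

/-- The tail sequence of a primitive ascent sequence: the minimal (last) entry of each
maximal strictly decreasing consecutive run, in order. For a primitive sequence, position `i`
is the end of a run iff it is the last position or `e i < e (i+1)`. -/
def tailSeq (e : List ℕ) : List ℕ :=
  (List.range e.length).filterMap (fun i =>
    if i + 1 = e.length ∨ e.getD i 0 < e.getD (i + 1) 0 then some (e.getD i 0) else none)

def IsRunEnd (e : List ℕ) (i : ℕ) : Prop :=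
  i + 1 = e.length ∨ e.getD i 0 < e.getD (i + 1) 0

lemma pairwise_le_tailSeq_iff (e : List ℕ) :
    (tailSeq e).Pairwise (· ≤ ·) ↔
      ∀ p q, p < q → q < e.length → IsRunEnd e p → IsRunEnd e q →
        e.getD p 0 ≤ e.getD q 0 := by
  unfold tailSeq IsRunEnd
  rw [List.pairwise_filterMap, List.pairwise_iff_getElem]
  simp only [List.getElem_range, List.length_range]
  constructor
  · intro h p q hpq hq hp hq'
    exact h p q (hpq.trans hq) hq hpq _ (if_pos hp) _ (if_pos hq')
  · intro h p q _ hq hpq a ha b hb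
    split_ifs at ha hb with hp hq'
    cases ha; cases hb
    exact h p q hpq hq hp hq'

lemma IsPrimitive.getD_succ_lt_of_not_isRunEnd {e : List ℕ} (hprim : IsPrimitive e) {j : ℕ}
    (hj : j < e.length) (hend : ¬ IsRunEnd e j) : e.getD (j + 1) 0 < e.getD j 0 := by
  rw [IsRunEnd, not_or, not_lt] at hend
  have := hprim j (by omega)
  omega

lemma IsPrimitive.exists_isRunEnd_le {e : List ℕ} (hprim : IsPrimitive e) {j : ℕ}
    (hj : j < e.length) :
    ∃ q, j ≤ q ∧ q < e.length ∧ IsRunEnd e q ∧ e.getD q 0 ≤ e.getD j 0 := by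
  induction h : e.length - j generalizing j with
  | zero => omega
  | succ d ih =>
    by_cases hend : IsRunEnd e j
    · exact ⟨j, le_rfl, hj, hend, le_rfl⟩
    · have hj1 : j + 1 < e.length := by unfold IsRunEnd at hend; omega
      obtain ⟨q, hjq, hq, hqend, hqle⟩ := ih hj1 (by omega)
      exact ⟨q, by omega, hq, hqend,
        hqle.trans (hprim.getD_succ_lt_of_not_isRunEnd hj hend).le⟩

theorem stmt2_general (e : List ℕ) (hprim : IsPrimitive e) :
    Avoids120 e ↔ List.Pairwise (· ≤ ·) (tailSeq e) := by
  rw [pairwise_le_tailSeq_iff]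
  constructor
  · -- a descent between two run ends `p < q` is a 120 at `(p, p + 1, q)`
    intro hav p q hpq hq hp hq'
    by_contra! hlt
    have hp' : e.getD p 0 < e.getD (p + 1) 0 := hp.resolve_left (by omega)
    have hqp : q ≠ p + 1 := by rintro rfl; omega
    exact hav ⟨p + 1, q, by omega, by omega, hq, by simpa using hlt, by simpa using hp'⟩
  · -- in a 120 at `(i - 1, i, j)`, `i - 1` is a run end and the run through `j` ends below it
    rintro hsorted ⟨i, j, hi, hij, hj, hji, hi'⟩
    obtain ⟨q, hjq, hq, hqend, hqj⟩ := hprim.exists_isRunEnd_le hj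
    have hiend : IsRunEnd e (i - 1) := Or.inr (by rwa [Nat.sub_add_cancel hi])
    have := hsorted (i - 1) q (by omega) hq hiend hqend
    omega

theorem stmt2 (n k : ℕ) (e : List ℕ) (hlen : e.length = n)
    (hasc : IsAscSeq e) (hprim : IsPrimitive e) (hk : ascents e = k) :
    Avoids120 e ↔ List.Pairwise (· ≤ ·) (tailSeq e) :=
  stmt2_general e hprim
end

section
/- If e is a primitive ascent sequence of length n with k ascents, then its tail sequence t(e) = t_1 t_2 ... t_{k+1} is an inversion sequence of length k+1, i.e., 0 ≤ t_i < i for all 1 ≤ i ≤ k+1. -/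
open scoped Classical

namespace Stmt4Aux

def A (e : List ℕ) (i : ℕ) : ℕ :=
  ((List.range i).filter (fun m => decide (e.getD m 0 < e.getD (m + 1) 0))).length

lemma A_mono (e : List ℕ) {i j : ℕ} (h : i ≤ j) : A e i ≤ A e j := by
  exact List.Sublist.length_le (List.Sublist.filter _ (List.range_sublist.mpr h))

lemma A_succ (e : List ℕ) (i : ℕ) :
    A e (i + 1) = A e i + (if e.getD i 0 < e.getD (i + 1) 0 then 1 else 0) := by
  rw [A, A, List.range_succ, List.filter_append, List.length_append]
  congr 1
  by_cases h : e.getD i 0 < e.getD (i + 1) 0 <;>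
    simp only [List.getD_eq_getElem?_getD] at h <;> simp [h]

lemma ascents_take (e : List ℕ) (i : ℕ) (h : i + 1 ≤ e.length) :
    ascents (e.take (i + 1)) = A e i := by
  unfold ascents A
  have hl : (e.take (i + 1)).length = i + 1 := by
    simp [Nat.min_eq_left h]
  rw [hl]
  simp only [Nat.add_sub_cancel]
  congr 1
  apply List.filter_congr
  intro m hm
  rw [List.mem_range] at hm
  have h1 : (e.take (i + 1)).getD m 0 = e.getD m 0 := by
    rw [List.getD_eq_getElem?_getD, List.getD_eq_getElem?_getD, List.getElem?_take]
    simp [Nat.lt_succ_of_lt hm]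
  have h2 : (e.take (i + 1)).getD (m + 1) 0 = e.getD (m + 1) 0 := by
    rw [List.getD_eq_getElem?_getD, List.getD_eq_getElem?_getD, List.getElem?_take]
    simp [Nat.succ_lt_succ hm]
  rw [h1, h2]

lemma bound (e : List ℕ) (hasc : IsAscSeq e) (hprim : IsPrimitive e) :
    ∀ i, i < e.length → e.getD i 0 ≤ A e i := by
  intro i hi
  match i with
  | 0 => exact hasc.1 0 hi
  | m + 1 =>
    have hne := hprim m hi
    have hup := hasc.2 m hi
    rw [ascents_take e m (le_of_lt hi)] at hup
    rcases Nat.lt_or_ge (e.getD m 0) (e.getD (m + 1) 0) with hlt | hge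
    · rw [A_succ, if_pos hlt]
      omega
    · have hgt : e.getD (m + 1) 0 < e.getD m 0 := by omega
      cases m with
      | zero => exact absurd (hasc.1 0 (by omega)) (by omega)
      | succ l =>
        have h2 := hasc.2 l (by omega)
        rw [ascents_take e l (by omega)] at h2
        have := A_mono e (show l ≤ l + 2 by omega)
        have heq : l + 1 + 1 = l + 2 := rfl
        rw [heq] at hgt hup ⊢
        omega

lemma filterMap_if (l : List ℕ) (p : ℕ → Prop) [DecidablePred p] (f : ℕ → ℕ) :
    l.filterMap (fun i => if p i then some (f i) else none)
      = (l.filter (fun i => decide (p i))).map f := by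
  induction l with
  | nil => rfl
  | cons a l ih =>
    by_cases h : p a <;> simp [List.filterMap_cons, h, ih]

lemma tailSeq_eq (e : List ℕ) :
    tailSeq e = ((List.range e.length).filter
        (fun i => decide (i + 1 = e.length ∨ e.getD i 0 < e.getD (i + 1) 0))).map
      (fun i => e.getD i 0) := by
  unfold tailSeq
  exact filterMap_if _ _ _

lemma key (q : ℕ → Bool) : ∀ (N j : ℕ), j < ((List.range N).filter q).length →
    ((List.range (((List.range N).filter q).getD j 0)).filter q).length = j := by
  intro N
  induction N with
  | zero => intro j h; simp at h
  | succ N ih =>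
    intro j h
    rw [List.range_succ, List.filter_append] at h ⊢
    by_cases hq : q N
    · simp only [List.filter_cons, hq, if_pos, List.filter_nil, List.length_append,
        List.length_cons, List.length_nil] at h ⊢
      rcases Nat.lt_or_ge j ((List.range N).filter q).length with h' | h'
      · rw [List.getD_append _ _ _ _ h']
        exact ih j h'
      · have hj : j = ((List.range N).filter q).length := by omega
        subst hj
        rw [List.getD_append_right _ _ _ _ h']
        simp
    · simp only [List.filter_cons, hq] at h ⊢
      simp only [Bool.false_eq_true, if_false, List.filter_nil, List.append_nil] at h ⊢
      exact ih j h

end Stmt4Aux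

theorem stmt4 (n k : ℕ) (hn : 1 ≤ n) (e : List ℕ) (hlen : e.length = n)
    (hasc : IsAscSeq e) (hprim : IsPrimitive e) (hk : ascents e = k) :
    (tailSeq e).length = k + 1 ∧ IsInvSeq (tailSeq e) := by
  subst hlen
  open Stmt4Aux in
  have hnn : e.length = (e.length - 1) + 1 := by omega
  set q : ℕ → Bool := fun m => decide (e.getD m 0 < e.getD (m + 1) 0) with hqdef
  set M : List ℕ := (List.range (e.length - 1)).filter q with hMdef
  have hMk : M.length = k := hk
  have hsplit : (List.range e.length).filter
      (fun i => decide (i + 1 = e.length ∨ e.getD i 0 < e.getD (i + 1) 0))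
      = M ++ [e.length - 1] := by
    conv_lhs => rw [hnn, List.range_succ]
    rw [List.filter_append]
    congr 1
    · apply List.filter_congr
      intro i hi
      rw [List.mem_range] at hi
      have h1 : ¬ (i + 1 = e.length) := by omega
      have h2 : ¬ (i = e.length - 1) := by omega
      simp [hqdef, h1, h2]
    · have : (e.length - 1) + 1 = e.length := by omega
      simp [this]
  have hlen' : (tailSeq e).length = k + 1 := by
    rw [Stmt4Aux.tailSeq_eq, hsplit]
    simp [hMk]
  refine ⟨hlen', ?_⟩
  intro j hj
  rw [hlen'] at hj
  have hLlen : (M ++ [e.length - 1]).length = k + 1 := by simp [hMk]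
  have hgd : (tailSeq e).getD j 0 = e.getD ((M ++ [e.length - 1]).getD j 0) 0 := by
    rw [Stmt4Aux.tailSeq_eq, hsplit, List.getD_eq_getElem _ _ (by simp [hMk]; omega),
      List.getElem_map, ← List.getD_eq_getElem]
  rw [hgd]
  rcases Nat.lt_or_ge j k with hjk | hjk
  · have hjM : j < M.length := by omega
    rw [List.getD_append _ _ _ _ hjM]
    set p := M.getD j 0 with hpdef
    have hpmem : p ∈ M := by
      rw [hpdef, List.getD_eq_getElem _ _ hjM]
      exact List.getElem_mem _
    have hplt : p < e.length := by
      have := (List.mem_filter.mp hpmem).1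
      rw [List.mem_range] at this
      omega
    have hb := Stmt4Aux.bound e hasc hprim p hplt
    have hkey := Stmt4Aux.key q (e.length - 1) j hjM
    have : A e p = j := hkey
    omega
  · rw [List.getD_append_right _ _ _ _ (by omega : M.length ≤ j)]
    have h0 : j - M.length = 0 := by omega
    rw [h0]
    have hb := Stmt4Aux.bound e hasc hprim (e.length - 1) (by omega)
    have hA : A e (e.length - 1) = k := hk
    simp only [List.getD_cons_zero]
    omega
end

section
/- Define polynomials f_{k,i}(x) by f_{0,0}(x) = 1, f_{k,i}(x) = 0 for k < i, and the recursion f_{k+1,i}(x) = (1+x)^{k+1-i} · (Σ_{j=0}^{i} f_{k,j}(x)) − f_{k,i}(x) for 0 ≤ i ≤ k+1. Then for all 0 ≤ i ≤ k, f_{k,i}(x) = (1+x)^{binomial(i,2)} · Π_{ℓ=i+1}^{k} ((1+x)^ℓ − 1). -/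
/-!
With `y = 1 + X`, the claimed closed form at level `k` has partial sums
`∑_{j ≤ i} y^C(j,2) ∏_{ℓ=j+1}^k (y^ℓ - 1) = y^C(i+1,2) ∏_{ℓ=i+1}^k (y^ℓ - 1)`,
a telescoping identity since `y^C(i+1,2) + y^C(i+1,2) (y^(i+1) - 1) = y^C(i+2,2)`.
Feeding these partial sums into the recursion and using `C(i+1,2) = C(i,2) + i` shows that
the closed form propagates from level `k` to level `k + 1`.
-/

open Polynomial Finset

lemma Nat.succ_choose_two (n : ℕ) : (n + 1).choose 2 = n.choose 2 + n := by
  rw [Nat.choose_succ_succ', Nat.choose_one_right, add_comm]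

section ClosedForm

variable {R : Type*} [CommRing R] (y : R)

lemma sum_range_pow_choose_two_mul_prod_Icc {i k : ℕ} (hik : i ≤ k) :
    ∑ j ∈ range (i + 1), y ^ j.choose 2 * ∏ ℓ ∈ Icc (j + 1) k, (y ^ ℓ - 1) =
      y ^ (i + 1).choose 2 * ∏ ℓ ∈ Icc (i + 1) k, (y ^ ℓ - 1) := by
  induction i with
  | zero => simp
  | succ i ih =>
    have hsplit : ∏ ℓ ∈ Icc (i + 1) k, (y ^ ℓ - 1) =
        (y ^ (i + 1) - 1) * ∏ ℓ ∈ Icc (i + 1 + 1) k, (y ^ ℓ - 1) := by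
      rw [← insert_Icc_add_one_left_eq_Icc (by omega : i + 1 ≤ k), prod_insert (by simp)]
    rw [sum_range_succ, ih (by omega), hsplit, Nat.succ_choose_two (i + 1), pow_add]
    ring

lemma pow_choose_two_mul_prod_Icc_succ {i k : ℕ} (hik : i ≤ k) :
    y ^ i.choose 2 * ∏ ℓ ∈ Icc (i + 1) (k + 1), (y ^ ℓ - 1) =
      y ^ (k + 1 - i) * (y ^ (i + 1).choose 2 * ∏ ℓ ∈ Icc (i + 1) k, (y ^ ℓ - 1)) -
        y ^ i.choose 2 * ∏ ℓ ∈ Icc (i + 1) k, (y ^ ℓ - 1) := by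
  have hexp : k + 1 - i + (i + 1).choose 2 = i.choose 2 + (k + 1) := by
    rw [Nat.succ_choose_two]; omega
  rw [prod_Icc_succ_top (by omega), ← mul_assoc (y ^ (k + 1 - i)), ← pow_add, hexp, pow_add]
  ring

end ClosedForm

theorem stmt5 (f : ℕ → ℕ → Polynomial ℤ) (h00 : f 0 0 = 1)
    (hz : ∀ k i, k < i → f k i = 0)
    (hrec : ∀ k i, i ≤ k + 1 →
      f (k + 1) i = (1 + X) ^ (k + 1 - i) * (∑ j ∈ Finset.range (i + 1), f k j) - f k i)
    (k i : ℕ) (hik : i ≤ k) :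
    f k i = (1 + X) ^ (Nat.choose i 2) *
      ∏ ℓ ∈ Finset.Icc (i + 1) k, ((1 + X) ^ ℓ - 1) := by
  induction k generalizing i with
  | zero =>
    obtain rfl : i = 0 := by omega
    simpa using h00
  | succ k ih =>
    have hsum : ∀ i ≤ k, ∑ j ∈ range (i + 1), f k j =
        (1 + X) ^ (i + 1).choose 2 * ∏ ℓ ∈ Icc (i + 1) k, ((1 + X) ^ ℓ - 1) := fun i hi => by
      rw [sum_congr rfl fun j hj => ih j (by simp at hj; omega),
        sum_range_pow_choose_two_mul_prod_Icc _ hi]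
    rcases hik.lt_or_eq with hi | rfl
    · rw [hrec k i hik, hsum i (by omega), ih i (by omega),
        pow_choose_two_mul_prod_Icc_succ _ (by omega)]
    · rw [hrec k (k + 1) le_rfl, sum_range_succ, hz k (k + 1) k.lt_succ_self, add_zero,
        hsum k le_rfl]
      simp
end

section
/- Define polynomials f_{k,i}(x) by f_{0,0}(x) = 1, f_{k,i}(x) = 0 for k < i, and f_{k+1,i}(x) = (1+x)^{k+1-i} · Σ_{j=0}^{i} f_{k,j}(x) − f_{k,i}(x). Then for every k ≥ 0, Σ_{i=0}^{k} f_{k,i}(x) = (1+x)^{binomial(k+1,2)}. -/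
/-!
Write `u = 1 + x`. The partial sums `S k i = ∑_{j ≤ i} f k j` obey a recurrence in `k` that does
not involve the individual `f k i`: the defining relation gives `f (k+1) (k+1) = S k k` on the
diagonal and `S (k+1) (i+1) = S (k+1) i + (u^(k-i) - 1) S k (i+1) + S k i` below it. The closed
form `u^C(i+1,2) ∏_{j=i+1}^{k} (u^j - 1)` satisfies the same recurrence and initial values, and
on the diagonal the product is empty.
-/

open Polynomial Finset

variable {R : Type*} [CommRing R] (u : R)

def partialSumClosedForm (k i : ℕ) : R :=
  u ^ (i + 1).choose 2 * ∏ j ∈ Ico (i + 1) (k + 1), (u ^ j - 1)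

theorem partialSumClosedForm_self (k : ℕ) :
    partialSumClosedForm u k k = u ^ (k + 1).choose 2 := by
  simp [partialSumClosedForm]

theorem partialSumClosedForm_succ_zero (k : ℕ) :
    partialSumClosedForm u (k + 1) 0 = (u ^ (k + 1) - 1) * partialSumClosedForm u k 0 := by
  rw [partialSumClosedForm, partialSumClosedForm, prod_Ico_succ_top (by omega)]
  ring

theorem partialSumClosedForm_succ_self (k : ℕ) :
    partialSumClosedForm u (k + 1) (k + 1) =
      partialSumClosedForm u (k + 1) k + partialSumClosedForm u k k := by
  simp only [partialSumClosedForm, Ico_self, prod_empty, prod_Ico_succ_top le_rfl,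
    Nat.choose_succ_succ' (k + 1), Nat.choose_one_right, pow_add]
  ring

theorem partialSumClosedForm_succ_succ {k i : ℕ} (hi : i < k) :
    partialSumClosedForm u (k + 1) (i + 1) =
      partialSumClosedForm u (k + 1) i + (u ^ (k - i) - 1) * partialSumClosedForm u k (i + 1) +
        partialSumClosedForm u k i := by
  have hQ : ∏ j ∈ Ico (i + 2) (k + 2), (u ^ j - 1) =
      (∏ j ∈ Ico (i + 2) (k + 1), (u ^ j - 1)) * (u ^ (k + 1) - 1) :=
    prod_Ico_succ_top (by omega) _
  rw [partialSumClosedForm, partialSumClosedForm, partialSumClosedForm, partialSumClosedForm, hQ,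
    prod_eq_prod_Ico_succ_bot (show i + 1 < k + 1 by omega),
    prod_eq_prod_Ico_succ_bot (show i + 1 < k + 2 by omega), hQ,
    Nat.choose_succ_succ' (i + 1), Nat.choose_one_right,
    show u ^ (k + 1) = u ^ (k - i) * u ^ (i + 1) by rw [← pow_add]; congr 1; omega, pow_add]
  ring

section Recurrence

variable {u} {f : ℕ → ℕ → R}
  (hrec : ∀ k i, i ≤ k + 1 →
    f (k + 1) i = u ^ (k + 1 - i) * (∑ j ∈ range (i + 1), f k j) - f k i)
include hrec

theorem sum_range_one_succ_of_rec (k : ℕ) :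
    ∑ j ∈ range 1, f (k + 1) j = (u ^ (k + 1) - 1) * ∑ j ∈ range 1, f k j := by
  rw [sum_range_one, sum_range_one, hrec k 0 (by omega), sum_range_one, Nat.sub_zero]
  ring

theorem apply_succ_self_of_rec (k : ℕ) : f (k + 1) (k + 1) = ∑ j ∈ range (k + 1), f k j := by
  rw [hrec k (k + 1) le_rfl, Nat.sub_self, pow_zero, one_mul, sum_range_succ, add_sub_cancel_right]

theorem sum_range_succ_succ_of_rec {k i : ℕ} (hi : i ≤ k) :
    ∑ j ∈ range (i + 2), f (k + 1) j =
      ∑ j ∈ range (i + 1), f (k + 1) j + (u ^ (k - i) - 1) * ∑ j ∈ range (i + 2), f k j +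
        ∑ j ∈ range (i + 1), f k j := by
  rw [sum_range_succ _ (i + 1), hrec k (i + 1) (by omega), show k + 1 - (i + 1) = k - i by omega,
    sum_range_succ (f k) (i + 1)]
  ring

theorem sum_range_eq_partialSumClosedForm (h00 : f 0 0 = 1) {k i : ℕ} (hi : i ≤ k) :
    ∑ j ∈ range (i + 1), f k j = partialSumClosedForm u k i := by
  induction k generalizing i with
  | zero =>
    obtain rfl : i = 0 := by omega
    simp [h00, partialSumClosedForm]
  | succ k ihk =>
    induction i with
    | zero => rw [sum_range_one_succ_of_rec hrec, ihk k.zero_le, partialSumClosedForm_succ_zero]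
    | succ i ihi =>
      rcases Nat.lt_or_eq_of_le (Nat.le_of_succ_le_succ hi) with hik | rfl
      · rw [sum_range_succ_succ_of_rec hrec hik.le, ihi (by omega), ihk hik, ihk hik.le,
          partialSumClosedForm_succ_succ u hik]
      · rw [sum_range_succ, ihi (by omega), apply_succ_self_of_rec hrec, ihk le_rfl,
          partialSumClosedForm_succ_self]

end Recurrence

theorem stmt6_general (f : ℕ → ℕ → Polynomial ℤ) (h00 : f 0 0 = 1)
    (hrec : ∀ k i, i ≤ k + 1 →
      f (k + 1) i = (1 + X) ^ (k + 1 - i) * (∑ j ∈ Finset.range (i + 1), f k j) - f k i)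
    (k : ℕ) :
    ∑ i ∈ Finset.range (k + 1), f k i = (1 + X) ^ (Nat.choose (k + 1) 2) := by
  rw [sum_range_eq_partialSumClosedForm hrec h00 le_rfl, partialSumClosedForm_self]

theorem stmt6 (f : ℕ → ℕ → Polynomial ℤ) (h00 : f 0 0 = 1)
    (hz : ∀ k i, k < i → f k i = 0)
    (hrec : ∀ k i, i ≤ k + 1 →
      f (k + 1) i = (1 + X) ^ (k + 1 - i) * (∑ j ∈ Finset.range (i + 1), f k j) - f k i)
    (k : ℕ) :
    ∑ i ∈ Finset.range (k + 1), f k i = (1 + X) ^ (Nat.choose (k + 1) 2) :=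
  stmt6_general f h00 hrec k
end

section
/- Every inversion sequence e of length n avoiding 1̲2̲0 with zero entries at positions i_1 = 1 < i_2 < ... < i_k decomposes uniquely as e = 0 W_1 0 W_2 0 ... 0 W_{k-1} 0 W_k, where for 1 ≤ j ≤ k-1 the block W_j (the entries strictly between the j-th and (j+1)-th zeros) is non-increasing and zero-free, and W_k (the entries after the last zero) is zero-free and avoids 1̲2̲0. -/
open scoped Classical

theorem stmt10 (e : List ℕ) (hinv : IsInvSeq e) (hav : Avoids120 e) (hne : 1 ≤ e.length) :
    -- the sequence starts with a zero
    e.getD 0 0 = 0 ∧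
    -- each block strictly between two zeros (i.e. any zero-free stretch followed by a later
    -- zero) is non-increasing
    (∀ i, i + 1 < e.length → e.getD i 0 ≠ 0 → e.getD (i + 1) 0 ≠ 0 →
      (∃ m, i < m ∧ m < e.length ∧ e.getD m 0 = 0) → e.getD (i + 1) 0 ≤ e.getD i 0) ∧
    -- the block after the last zero is zero-free and avoids 12-0
    (∀ m, m < e.length → e.getD m 0 = 0 →
      (∀ m', m < m' → m' < e.length → e.getD m' 0 ≠ 0) →
      (∀ x ∈ e.drop (m + 1), x ≠ 0) ∧ Avoids120 (e.drop (m + 1))) := by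
  have hdrop : ∀ (k i : ℕ), (e.drop k).getD i 0 = e.getD (k + i) 0 := by
    intro k i
    simp [List.getD_eq_getElem?_getD, List.getElem?_drop]
  refine ⟨?_, ?_, ?_⟩
  · have := hinv 0 (by omega)
    omega
  · rintro i hi1 hi0 hi10 ⟨m, him, hm, hm0⟩
    by_contra hlt
    push_neg at hlt
    have hmne : m ≠ i + 1 := fun h => hi10 (h ▸ hm0)
    exact hav ⟨i + 1, m, by omega, by omega, hm, by simp only [Nat.add_sub_cancel]; omega, by simp only [Nat.add_sub_cancel]; omega⟩
  · intro m hm hm0 hlast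
    constructor
    · intro x hx
      obtain ⟨i, hi, rfl⟩ := List.mem_iff_getElem.mp hx
      have hlen : (e.drop (m + 1)).length = e.length - (m + 1) := by simp
      have : (e.drop (m + 1))[i] = (e.drop (m + 1)).getD i 0 := by
        simp [List.getD_eq_getElem?_getD, List.getElem?_eq_getElem hi]
      rw [this, hdrop]
      exact hlast (m + 1 + i) (by omega) (by omega)
    · rintro ⟨i, j, h1, hij, hj, hji, hii⟩
      simp only [hdrop] at hji hii
      have hjl : j < e.length - (m + 1) := by simpa using hj
      have : m + 1 + (i - 1) = (m + 1 + i) - 1 := by omega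
      rw [this] at hji hii
      exact hav ⟨m + 1 + i, m + 1 + j, by omega, by omega, by omega, hji, hii⟩
end

section
/- For a permutation π of [n], define its invcode Θ(π) = (e_1,...,e_n) where e_i = |{j < i : π_j > π_i}|. Then π contains an occurrence of the vincular pattern 3 2̲1̲ 4 (indices i < j < j+1 < k with π_k > π_i > π_j > π_{j+1}) if and only if Θ(π) contains an occurrence of the vincular pattern 1̲2̲0 (indices i < i+1 < j with e_j < e_i < e_{i+1}). Consequently, Θ restricts to a bijection between 3 2̲1̲ 4-avoiding permutations of [n] and 1̲2̲0-avoiding inversion sequences of length n. -/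
/-- The invcode of a permutation of `Fin n`: `e i = #{j < i : π j > π i}`. -/
def theta (n : ℕ) (π : Equiv.Perm (Fin n)) : Fin n → ℕ :=
  fun i => (Finset.univ.filter (fun j => j < i ∧ π i < π j)).card

/-- `π` contains an occurrence of the vincular pattern 3-21-4 :
indices `i < j < j+1 < k` with `π k > π i > π j > π (j+1)`. -/
def Contains3214 (n : ℕ) (π : Equiv.Perm (Fin n)) : Prop :=
  ∃ i j k : Fin n, ∃ h : j.val + 1 < n,
    i < j ∧ j.val + 1 < k.val ∧
    π ⟨j.val + 1, h⟩ < π j ∧ π j < π i ∧ π i < π k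

/-- A sequence `e : Fin n → ℕ` contains an occurrence of the vincular pattern 12-0 :
indices `i < i+1... ` i.e. `0 < i`, `i < j` with `e j < e (i-1) < e i`. -/
def Contains120F (n : ℕ) (e : Fin n → ℕ) : Prop :=
  ∃ i j : Fin n, 0 < i.val ∧ i < j ∧
    e j < e ⟨i.val - 1, lt_of_le_of_lt (Nat.sub_le _ _) i.isLt⟩ ∧
    e ⟨i.val - 1, lt_of_le_of_lt (Nat.sub_le _ _) i.isLt⟩ < e i

open Finset Equiv

lemma theta_le (n : ℕ) (π : Equiv.Perm (Fin n)) (i : Fin n) : theta n π i ≤ i.val := by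
  rw [theta, ← Fin.card_Iio i]
  apply Finset.card_le_card
  intro j hj
  simp only [Finset.mem_filter] at hj
  exact Finset.mem_Iio.mpr hj.2.1

lemma theta_forward (n : ℕ) (π : Equiv.Perm (Fin n)) (h : Contains3214 n π) :
    Contains120F n (theta n π) := by
  obtain ⟨i, j, k, h1, hij, hjk, hd, hji, hik⟩ := h
  set K := Finset.univ.filter (fun m : Fin n => j.val + 1 < m.val ∧ π i < π m) with hK
  have hkK : k ∈ K := by simp [hK, hjk, hik]
  obtain ⟨q, hqK, hqmin⟩ := K.exists_min_image (fun m => m) ⟨k, hkK⟩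
  simp only [hK, Finset.mem_filter, Finset.mem_univ, true_and] at hqK
  obtain ⟨hq1, hq2⟩ := hqK
  refine ⟨⟨j.val + 1, h1⟩, q, Nat.succ_pos _, ?_, ?_, ?_⟩
  · exact Fin.mk_lt_of_lt_val hq1
  · -- theta π q < theta π j  (after rewriting the middle index to j)
    show theta n π q < theta n π ⟨j.val + 1 - 1, _⟩
    have hje : (⟨j.val + 1 - 1, lt_of_le_of_lt (Nat.sub_le _ _) h1⟩ : Fin n) = j := by
      apply Fin.ext; simp
    rw [hje]
    have hiA : i ∈ Finset.univ.filter (fun l => l < j ∧ π j < π l) := by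
      simp [hij, hji]
    have hsub : Finset.univ.filter (fun l => l < q ∧ π q < π l) ⊆
        Finset.univ.filter (fun l => l < j ∧ π j < π l) := by
      intro l hl
      simp only [Finset.mem_filter, Finset.mem_univ, true_and] at hl ⊢
      obtain ⟨hlq, hql⟩ := hl
      have hle : ¬ (j.val + 1 < l.val) := by
        intro hc
        have hlK : l ∈ K := by
          simp only [hK, Finset.mem_filter, Finset.mem_univ, true_and]
          exact ⟨hc, lt_trans hq2 hql⟩
        exact absurd (hqmin l hlK) (not_le.mpr hlq)
      have hne1 : l ≠ ⟨j.val + 1, h1⟩ := by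
        intro hc
        rw [hc] at hql
        exact absurd (lt_trans hd (lt_trans hji hq2)) (not_lt.mpr (le_of_lt hql))
      have hne2 : l ≠ j := by
        intro hc
        rw [hc] at hql
        exact absurd (lt_trans hji hq2) (not_lt.mpr (le_of_lt hql))
      have hlj : l.val < j.val := by
        rcases Nat.lt_or_ge l.val (j.val + 1) with h' | h'
        · rcases Nat.lt_or_ge l.val j.val with h'' | h''
          · exact h''
          · exact absurd (Fin.ext (le_antisymm (Nat.lt_succ_iff.mp h') h'')) hne2
        · rcases Nat.lt_or_ge (j.val + 1) l.val with h'' | h''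
          · exact absurd h'' hle
          · exact absurd (Fin.ext (le_antisymm h'' h')) hne1
      exact ⟨hlj, lt_trans hji (lt_trans hq2 hql)⟩
    have hnot : i ∉ Finset.univ.filter (fun l => l < q ∧ π q < π l) := by
      simp only [Finset.mem_filter, Finset.mem_univ, true_and, not_and]
      intro _
      exact not_lt.mpr (le_of_lt hq2)
    exact Finset.card_lt_card ((Finset.ssubset_iff_of_subset hsub).mpr ⟨i, hiA, hnot⟩)
  · -- theta π j < theta π ⟨j+1⟩
    show theta n π ⟨j.val + 1 - 1, _⟩ < theta n π ⟨j.val + 1, h1⟩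
    have hje : (⟨j.val + 1 - 1, lt_of_le_of_lt (Nat.sub_le _ _) h1⟩ : Fin n) = j := by
      apply Fin.ext; simp
    rw [hje]
    set j1 : Fin n := ⟨j.val + 1, h1⟩ with hj1
    have hjj1 : j < j1 := by rw [Fin.lt_def]; exact Nat.lt_succ_self _
    have hjnot : j ∉ Finset.univ.filter (fun l => l < j ∧ π j < π l) := by simp
    have hsub : insert j (Finset.univ.filter (fun l => l < j ∧ π j < π l)) ⊆
        Finset.univ.filter (fun l => l < j1 ∧ π j1 < π l) := by
      intro l hl
      rcases Finset.mem_insert.mp hl with rfl | hl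
      · simp only [Finset.mem_filter, Finset.mem_univ, true_and]
        exact ⟨hjj1, hd⟩
      · simp only [Finset.mem_filter, Finset.mem_univ, true_and] at hl ⊢
        exact ⟨lt_trans hl.1 hjj1, lt_trans hd hl.2⟩
    have := Finset.card_le_card hsub
    rw [Finset.card_insert_of_notMem hjnot] at this
    exact lt_of_lt_of_le (Nat.lt_succ_self _) this

lemma theta_backward (n : ℕ) (π : Equiv.Perm (Fin n)) (h : Contains120F n (theta n π)) :
    Contains3214 n π := by
  obtain ⟨i, q, hi0, hiq, h1, h2⟩ := h
  set p : Fin n := ⟨i.val - 1, lt_of_le_of_lt (Nat.sub_le _ _) i.isLt⟩ with hp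
  have hpi : p.val + 1 = i.val := Nat.succ_pred_eq_of_pos hi0
  have hpltI : p < i := by rw [Fin.lt_def]; omega
  have hplq : p < q := lt_trans hpltI hiq
  -- Step 1 : descent, π i < π p
  have hdesc : π i < π p := by
    rcases lt_trichotomy (π i) (π p) with h' | h' | h'
    · exact h'
    · exact absurd (π.injective h') (by intro hc; rw [hc] at hpltI; exact lt_irrefl _ hpltI)
    · exfalso
      have hsub : Finset.univ.filter (fun l => l < i ∧ π i < π l) ⊆
          Finset.univ.filter (fun l => l < p ∧ π p < π l) := by
        intro l hl
        simp only [Finset.mem_filter, Finset.mem_univ, true_and] at hl ⊢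
        obtain ⟨hli, hil⟩ := hl
        have hlp : π p < π l := lt_trans h' hil
        have hlnep : l ≠ p := by
          intro hc; rw [hc] at hlp; exact lt_irrefl _ hlp
        have : l.val < p.val := by
          have := Fin.lt_def.mp hli
          have hne := fun hc => hlnep (Fin.ext hc)
          omega
        exact ⟨this, hlp⟩
      exact absurd (Finset.card_le_card hsub) (not_le.mpr h2)
  -- Step 2 : pick value-minimal a with a < p and π p < π a
  set A := Finset.univ.filter (fun l => l < p ∧ π p < π l) with hA
  have hAne : A.Nonempty := by
    rw [← Finset.card_pos]
    exact lt_of_le_of_lt (Nat.zero_le _) h1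
  obtain ⟨a, haA, hamin⟩ := A.exists_min_image (fun l => π l) hAne
  simp only [hA, Finset.mem_filter, Finset.mem_univ, true_and] at haA
  obtain ⟨hap, hpa⟩ := haA
  have haq : a ≠ q := by
    intro hc; rw [hc] at hap; exact absurd (lt_trans hap hplq) (lt_irrefl _)
  rcases lt_trichotomy (π a) (π q) with h' | h' | h'
  · -- occurrence
    refine ⟨a, p, q, lt_of_eq_of_lt hpi i.isLt, hap, ?_, ?_, hpa, h'⟩
    · rw [hpi]; exact Fin.lt_def.mp hiq
    · have : (⟨p.val + 1, lt_of_eq_of_lt hpi i.isLt⟩ : Fin n) = i := Fin.ext hpi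
      rw [this]; exact hdesc
  · exact absurd (π.injective h') haq
  · exfalso
    have hsub : A ⊆ Finset.univ.filter (fun l => l < q ∧ π q < π l) := by
      intro l hl
      simp only [hA, Finset.mem_filter, Finset.mem_univ, true_and] at hl ⊢
      exact ⟨lt_trans hl.1 hplq, lt_of_lt_of_le h' (hamin l (by
        simp only [hA, Finset.mem_filter, Finset.mem_univ, true_and]; exact hl))⟩
    exact absurd (Finset.card_le_card hsub) (not_le.mpr h1)

lemma theta_symm_eq (n : ℕ) (π σ : Equiv.Perm (Fin n)) (h : theta n π = theta n σ) :
    ∀ m : ℕ, ∀ v : Fin n, v.val = m → π.symm v = σ.symm v := by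
  intro m
  induction m using Nat.strong_induction_on with
  | _ m IH =>
  intro v hv
  subst hv
  have hIH : ∀ w : Fin n, w < v → π.symm w = σ.symm w := fun w hw =>
    IH w.val (Fin.lt_def.mp hw) w rfl
  have hS : ∀ j : Fin n, (v ≤ π j ↔ v ≤ σ j) := by
    intro j
    constructor
    · intro hj
      by_contra hc
      push_neg at hc
      have h1 := hIH (σ j) hc
      rw [Equiv.symm_apply_apply] at h1
      have hpj : π j = σ j := by
        conv_lhs => rw [← h1]
        exact Equiv.apply_symm_apply π (σ j)
      rw [hpj] at hj
      exact absurd hj (not_le.mpr hc)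
    · intro hj
      by_contra hc
      push_neg at hc
      have h1 := hIH (π j) hc
      rw [Equiv.symm_apply_apply] at h1
      have hpj : σ j = π j := by
        conv_lhs => rw [h1]
        exact Equiv.apply_symm_apply σ (π j)
      rw [hpj] at hj
      exact absurd hj (not_le.mpr hc)
  have hN : ∀ i : Fin n,
      (Finset.univ.filter (fun j => j < i ∧ v ≤ π j)).card =
      (Finset.univ.filter (fun j => j < i ∧ v ≤ σ j)).card := by
    intro i
    congr 1
    apply Finset.filter_congr
    intro j _
    simp [hS j]
  have hAx : ∀ τ : Equiv.Perm (Fin n), theta n τ (τ.symm v) =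
      (Finset.univ.filter (fun j => j < τ.symm v ∧ v ≤ τ j)).card := by
    intro τ
    unfold theta
    congr 1
    ext j
    simp only [Finset.mem_filter, Finset.mem_univ, true_and]
    constructor
    · rintro ⟨ha, hb⟩
      rw [Equiv.apply_symm_apply] at hb
      exact ⟨ha, le_of_lt hb⟩
    · rintro ⟨ha, hb⟩
      refine ⟨ha, ?_⟩
      rw [Equiv.apply_symm_apply]
      rcases lt_or_eq_of_le hb with h' | h'
      · exact h'
      · exfalso
        have : j = τ.symm v := by
          have := congrArg τ.symm (congrArg id h'.symm)
          simpa [Equiv.symm_apply_apply] using congrArg τ.symm h'.symm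
        rw [this] at ha
        exact lt_irrefl _ ha
  have hBx : ∀ (τ : Equiv.Perm (Fin n)) (i : Fin n), τ.symm v < i → v < τ i →
      theta n τ i < (Finset.univ.filter (fun j => j < i ∧ v ≤ τ j)).card := by
    intro τ i hti hvi
    refine Finset.card_lt_card ?_
    rw [Finset.ssubset_iff_of_subset ?sub]
    · refine ⟨τ.symm v, ?_, ?_⟩
      · simp only [Finset.mem_filter, Finset.mem_univ, true_and]
        exact ⟨hti, le_of_eq (Equiv.apply_symm_apply τ v).symm⟩
      · simp only [theta, Finset.mem_filter, Finset.mem_univ, true_and, not_and]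
        intro _
        rw [Equiv.apply_symm_apply]
        exact not_lt.mpr (le_of_lt hvi)
    case sub =>
      intro j hj
      simp only [theta, Finset.mem_filter, Finset.mem_univ, true_and] at hj ⊢
      exact ⟨hj.1, le_of_lt (lt_trans hvi hj.2)⟩
  rcases lt_trichotomy (π.symm v) (σ.symm v) with hts | hts | hts
  · exfalso
    set i := σ.symm v with hi
    have hvi : v < π i := by
      rcases lt_trichotomy (π i) v with h' | h' | h'
      · exfalso
        have h1 := hIH (π i) h'
        rw [Equiv.symm_apply_apply] at h1
        have hsi : σ i = π i := by
          conv_lhs => rw [h1]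
          exact Equiv.apply_symm_apply σ (π i)
        have hsv : σ i = v := by rw [hi, Equiv.apply_symm_apply]
        rw [← hsi, hsv] at h'
        exact lt_irrefl _ h'
      · exfalso
        have := congrArg π.symm h'
        rw [Equiv.symm_apply_apply] at this
        rw [this] at hts
        exact lt_irrefl _ hts
      · exact h'
    have hb := hBx π i hts hvi
    have ha := hAx σ
    rw [← hi] at ha
    rw [congrFun h i, ha, ← hN i] at hb
    exact lt_irrefl _ hb
  · exact hts
  · exfalso
    set i := π.symm v with hi
    have hvi : v < σ i := by
      rcases lt_trichotomy (σ i) v with h' | h' | h'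
      · exfalso
        have h1 := hIH (σ i) h'
        rw [Equiv.symm_apply_apply] at h1
        have hsi : π i = σ i := by
          conv_lhs => rw [← h1]
          exact Equiv.apply_symm_apply π (σ i)
        have hsv : π i = v := by rw [hi, Equiv.apply_symm_apply]
        rw [← hsi, hsv] at h'
        exact lt_irrefl _ h'
      · exfalso
        have := congrArg σ.symm h'
        rw [Equiv.symm_apply_apply] at this
        rw [this] at hts
        exact lt_irrefl _ hts
      · exact h'
    have hb := hBx σ i hts hvi
    have ha := hAx π
    rw [← hi] at ha
    rw [← congrFun h i, ha, hN i] at hb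
    exact lt_irrefl _ hb

lemma theta_injective (n : ℕ) : Function.Injective (theta n) := by
  intro π σ h
  have hsymm : π.symm = σ.symm := Equiv.ext fun v => theta_symm_eq n π σ h v.val v rfl
  have := congrArg Equiv.symm hsymm
  simpa using this

lemma prod_fin_succ (n : ℕ) : (∏ i : Fin n, (i.val + 1)) = n.factorial := by
  induction n with
  | zero => simp
  | succ n IH =>
    rw [Fin.prod_univ_castSucc]
    simp only [Fin.coe_castSucc, Fin.val_last]
    rw [IH, Nat.factorial_succ, Nat.mul_comm]

lemma theta_surjective (n : ℕ) (e : Fin n → ℕ) (he : ∀ i, e i ≤ i.val) :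
    ∃ π : Equiv.Perm (Fin n), theta n π = e := by
  set F : Equiv.Perm (Fin n) → (∀ i : Fin n, Fin (i.val + 1)) :=
    fun π i => ⟨theta n π i, Nat.lt_succ_of_le (theta_le n π i)⟩ with hF
  have hFinj : Function.Injective F := by
    intro π σ h
    apply theta_injective n
    funext i
    exact congrArg Fin.val (congrFun h i)
  have hcard : Fintype.card (Equiv.Perm (Fin n)) = Fintype.card (∀ i : Fin n, Fin (i.val + 1)) := by
    rw [Fintype.card_perm, Fintype.card_fin, Fintype.card_pi]
    simp only [Fintype.card_fin]
    exact (prod_fin_succ n).symm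
  have hFbij : Function.Bijective F := (Fintype.bijective_iff_injective_and_card F).mpr
    ⟨hFinj, hcard⟩
  obtain ⟨π, hπ⟩ := hFbij.2 (fun i => ⟨e i, Nat.lt_succ_of_le (he i)⟩)
  refine ⟨π, funext fun i => ?_⟩
  exact congrArg Fin.val (congrFun hπ i)

theorem stmt11 (n : ℕ) :
    (∀ π : Equiv.Perm (Fin n), Contains3214 n π ↔ Contains120F n (theta n π)) ∧
    Set.BijOn (theta n) {π : Equiv.Perm (Fin n) | ¬ Contains3214 n π}
      {e : Fin n → ℕ | (∀ i : Fin n, e i ≤ i.val) ∧ ¬ Contains120F n e} := by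
  refine ⟨fun π => ⟨theta_forward n π, theta_backward n π⟩, ?_, ?_, ?_⟩
  · intro π hπ
    exact ⟨theta_le n π, fun hc => hπ (theta_backward n π hc)⟩
  · exact (theta_injective n).injOn
  · intro e he
    obtain ⟨π, rfl⟩ := theta_surjective n e he.1
    exact ⟨π, fun hc => he.2 (theta_forward n π hc), rfl⟩
end

section
/- Let e be an inversion sequence of length n avoiding 1̲2̲0, with last entry e_n. Set p = n − e_n and let q be the number of values k with 0 ≤ k ≤ e_n such that appending k to e gives a 1̲2̲0-avoiding inversion sequence of length n+1. Then e·k avoids 1̲2̲0 if and only if e_n − q + 1 ≤ k ≤ n; moreover, if e_n < k ≤ n, say k = e_n + i with 1 ≤ i ≤ p, the extended sequence has parameters (p − i + 1, i + 1), while if e_n − q + 1 ≤ k ≤ e_n, say k = e_n + 1 − i with 1 ≤ i ≤ q, the extended sequence has parameters (p + i, q + 1 − i). -/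
open scoped Classical

/-- The last entry of a sequence. -/
def lastE (e : List ℕ) : ℕ := e.getD (e.length - 1) 0

/-- The parameter `p` of a 12-0-avoiding inversion sequence: `p = n - e_n`. -/
def pParam (e : List ℕ) : ℕ := e.length - lastE e

/-- The parameter `q`: the number of `k ≤ e_n` such that appending `k` keeps the
sequence 12-0-avoiding. -/
noncomputable def qParam (e : List ℕ) : ℕ :=
  ((Finset.range (lastE e + 1)).filter (fun k => Avoids120 (e ++ [k]))).card

/-- The largest ascent bottom of `f` (0 if `f` has no ascent). -/
noncomputable def Mval (f : List ℕ) : ℕ :=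
  ((Finset.range f.length).filter
    (fun i => 1 ≤ i ∧ f.getD (i - 1) 0 < f.getD i 0)).sup (fun i => f.getD (i - 1) 0)

lemma getD_app_lt (f : List ℕ) (k : ℕ) {j : ℕ} (hj : j < f.length) :
    (f ++ [k]).getD j 0 = f.getD j 0 := List.getD_append _ _ _ _ hj

lemma getD_app_len (f : List ℕ) (k : ℕ) : (f ++ [k]).getD f.length 0 = k := by
  rw [List.getD_append_right _ _ _ _ (le_refl _), Nat.sub_self]; rfl

lemma lastE_app (f : List ℕ) (k : ℕ) : lastE (f ++ [k]) = k := by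
  simp only [lastE, List.length_append, List.length_singleton, Nat.add_sub_cancel]
  exact getD_app_len f k

lemma ext_iff (f : List ℕ) (hf : Avoids120 f) (k : ℕ) :
    Avoids120 (f ++ [k]) ↔ Mval f ≤ k := by
  constructor
  · intro h
    apply Finset.sup_le
    intro i hi
    simp only [Finset.mem_filter, Finset.mem_range] at hi
    obtain ⟨hil, hi1, hasc⟩ := hi
    by_contra hk
    push_neg at hk
    exact h ⟨i, f.length, hi1, hil, by simp, by
      rw [getD_app_len, getD_app_lt f k (by omega)]; exact hk, by
      rw [getD_app_lt f k (by omega), getD_app_lt f k hil]; exact hasc⟩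
  · rintro hM ⟨i, j, h1, h2, h3, h4, h5⟩
    simp only [List.length_append, List.length_singleton] at h3
    rcases lt_or_ge j f.length with hj | hj
    · rw [getD_app_lt f k hj, getD_app_lt f k (by omega : i - 1 < f.length)] at h4
      rw [getD_app_lt f k (by omega : i - 1 < f.length),
        getD_app_lt f k (by omega : i < f.length)] at h5
      exact hf ⟨i, j, h1, h2, hj, h4, h5⟩
    · have hjl : j = f.length := by omega
      subst hjl
      rw [getD_app_len, getD_app_lt f k (by omega)] at h4
      rw [getD_app_lt f k (by omega), getD_app_lt f k h2] at h5
      have : f.getD (i - 1) 0 ≤ Mval f := by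
        unfold Mval
        exact Finset.le_sup (f := fun i => f.getD (i - 1) 0)
          (by simp only [Finset.mem_filter, Finset.mem_range]; exact ⟨h2, h1, h5⟩)
      omega

lemma M_le_last (f : List ℕ) (hf : Avoids120 f) : Mval f ≤ lastE f := by
  apply Finset.sup_le
  intro i hi
  simp only [Finset.mem_filter, Finset.mem_range] at hi
  obtain ⟨hil, hi1, hasc⟩ := hi
  rcases eq_or_lt_of_le (Nat.le_sub_one_of_lt hil) with he | hlt
  · rw [lastE, ← he]; omega
  · by_contra hk
    push_neg at hk
    exact hf ⟨i, f.length - 1, hi1, hlt, by omega, by rw [lastE] at hk; exact hk, hasc⟩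

lemma q_eq (f : List ℕ) (hf : Avoids120 f) : qParam f = lastE f + 1 - Mval f := by
  unfold qParam
  rw [Finset.filter_congr (fun k _ => by
    simp only [ext_iff f hf k, decide_eq_true_eq] : ∀ k ∈ Finset.range (lastE f + 1),
      Avoids120 (f ++ [k]) ↔ Mval f ≤ k)]
  have : (Finset.range (lastE f + 1)).filter (fun k => Mval f ≤ k)
      = Finset.Ico (Mval f) (lastE f + 1) := by
    ext x; simp only [Finset.mem_filter, Finset.mem_range, Finset.mem_Ico]; omega
  rw [this, Nat.card_Ico]

lemma Mval_app (f : List ℕ) (hf : 1 ≤ f.length) (k : ℕ) :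
    Mval (f ++ [k]) = if lastE f < k then max (lastE f) (Mval f) else Mval f := by
  unfold Mval
  have hlen : (f ++ [k]).length = f.length + 1 := by simp
  rw [hlen, Finset.range_add_one, Finset.filter_insert]
  have hfe : (Finset.range f.length).filter
      (fun i => 1 ≤ i ∧ (f ++ [k]).getD (i - 1) 0 < (f ++ [k]).getD i 0)
      = (Finset.range f.length).filter (fun i => 1 ≤ i ∧ f.getD (i - 1) 0 < f.getD i 0) := by
    apply Finset.filter_congr
    intro x hx
    simp only [Finset.mem_range] at hx
    rw [getD_app_lt f k (by omega : x - 1 < f.length), getD_app_lt f k hx]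
  have hsup : ((Finset.range f.length).filter
      (fun i => 1 ≤ i ∧ (f ++ [k]).getD (i - 1) 0 < (f ++ [k]).getD i 0)).sup
        (fun i => (f ++ [k]).getD (i - 1) 0)
      = ((Finset.range f.length).filter
      (fun i => 1 ≤ i ∧ f.getD (i - 1) 0 < f.getD i 0)).sup (fun i => f.getD (i - 1) 0) := by
    apply Finset.sup_congr hfe
    intro x hx
    simp only [hfe, Finset.mem_filter, Finset.mem_range] at hx
    exact getD_app_lt f k (by omega : x - 1 < f.length)
  have hbot : (f ++ [k]).getD (f.length - 1) 0 = lastE f := by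
    rw [getD_app_lt f k (by omega : f.length - 1 < f.length)]; rfl
  have hcond : (1 ≤ f.length ∧ (f ++ [k]).getD (f.length - 1) 0 < (f ++ [k]).getD f.length 0)
      ↔ lastE f < k := by
    rw [hbot, getD_app_len]
    exact ⟨fun h => h.2, fun h => ⟨hf, h⟩⟩
  by_cases h : lastE f < k
  · rw [if_pos (hcond.mpr h), if_pos h, Finset.sup_insert, hsup, hbot]
  · rw [if_neg (fun hc => h (hcond.mp hc)), if_neg h, hsup]

theorem stmt13 (n : ℕ) (hn : 0 < n) (e : List ℕ) (hlen : e.length = n)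
    (hinv : IsInvSeq e) (hav : Avoids120 e) :
    -- the extension e·k avoids 12-0 iff e_n − q + 1 ≤ k (≤ n)
    (∀ k, k ≤ n → (Avoids120 (e ++ [k]) ↔ lastE e + 1 - qParam e ≤ k)) ∧
    -- case k = e_n + i, 1 ≤ i ≤ p: new parameters (p − i + 1, i + 1)
    (∀ i, 1 ≤ i → i ≤ pParam e →
      pParam (e ++ [lastE e + i]) = pParam e - i + 1 ∧
      qParam (e ++ [lastE e + i]) = i + 1) ∧
    -- case k = e_n + 1 − i, 1 ≤ i ≤ q: new parameters (p + i, q + 1 − i)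
    (∀ i, 1 ≤ i → i ≤ qParam e →
      pParam (e ++ [lastE e + 1 - i]) = pParam e + i ∧
      qParam (e ++ [lastE e + 1 - i]) = qParam e + 1 - i) := by
  have hM : Mval e ≤ lastE e := M_le_last e hav
  have hq : qParam e = lastE e + 1 - Mval e := q_eq e hav
  have hlast : lastE e ≤ n - 1 := by
    have := hinv (n - 1) (by omega)
    rw [lastE, hlen]
    exact this
  have hp : pParam e = n - lastE e := by rw [pParam, hlen]
  have hplen : ∀ k, pParam (e ++ [k]) = n + 1 - k := by
    intro k
    rw [pParam, lastE_app, List.length_append, List.length_singleton, hlen]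
  have hlen1 : 1 ≤ e.length := by omega
  refine ⟨fun k _ => by rw [ext_iff e hav k]; omega, fun i h1 h2 => ?_, fun i h1 h2 => ?_⟩
  · -- k = lastE e + i
    have hav' : Avoids120 (e ++ [lastE e + i]) := (ext_iff e hav _).mpr (by omega)
    have hM' : Mval (e ++ [lastE e + i]) = lastE e := by
      rw [Mval_app e hlen1, if_pos (by omega)]
      omega
    constructor
    · rw [hplen, hp]; rw [hp] at h2; omega
    · rw [q_eq _ hav', lastE_app, hM']
      omega
  · -- k = lastE e + 1 - i
    have hiq : i ≤ lastE e + 1 - Mval e := by omega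
    have hav' : Avoids120 (e ++ [lastE e + 1 - i]) := (ext_iff e hav _).mpr (by omega)
    have hM' : Mval (e ++ [lastE e + 1 - i]) = Mval e := by
      rw [Mval_app e hlen1, if_neg (by omega)]
    constructor
    · rw [hplen, hp]; omega
    · rw [q_eq _ hav', lastE_app, hM']
      omega
end

section
/- For an inversion sequence e of length n avoiding 1̲2̲0 and a value k with 0 ≤ k ≤ n, the sequence (e_1,...,e_n,k) is a 1̲2̲0-avoiding inversion sequence of length n+1 if and only if there is no index i with 2 ≤ i ≤ n and k < e_{i-1} < e_i. -/
open scoped Classical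

theorem stmt15 (n : ℕ) (e : List ℕ) (hlen : e.length = n)
    (hinv : IsInvSeq e) (hav : Avoids120 e) (k : ℕ) (hk : k ≤ n) :
    Avoids120 (e ++ [k]) ↔
      ¬ ∃ i, 1 ≤ i ∧ i < n ∧ k < e.getD (i - 1) 0 ∧ e.getD (i - 1) 0 < e.getD i 0 := by
  have hlen' : (e ++ [k]).length = n + 1 := by simp [hlen]
  have hget : ∀ m, m < n → (e ++ [k]).getD m 0 = e.getD m 0 := by
    intro m hm
    rw [List.getD_append _ _ _ _ (by omega)]
  have hgetn : (e ++ [k]).getD n 0 = k := by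
    rw [List.getD_eq_getElem _ _ (by omega)]
    simp [List.getElem_append_right, hlen]
  constructor
  · intro h hc
    obtain ⟨i, h1, h2, h3, h4⟩ := hc
    exact h ⟨i, n, h1, h2, by omega, by rw [hgetn, hget (i-1) (by omega), hget i h2]; exact ⟨h3, h4⟩⟩
  · intro h hc
    obtain ⟨i, j, h1, h2, h3, h4, h5⟩ := hc
    rcases lt_or_ge j n with hj | hj
    · rw [hget j hj, hget (i-1) (by omega)] at h4; rw [hget (i-1) (by omega), hget i (by omega)] at h5
      exact hav ⟨i, j, h1, h2, by omega, h4, h5⟩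
    · have hjn : j = n := by omega
      subst hjn
      rw [hgetn, hget (i-1) (by omega)] at h4; rw [hget (i-1) (by omega), hget i (by omega)] at h5
      exact h ⟨i, h1, h2, h4, h5⟩
end

section
/- The number of 1̲2̲0-avoiding inversion sequences of length n whose last entry is 0 equals the Bell number B_{n-1}. -/
open scoped Classical

/-!
Since the last entry is `0`, an occurrence of `12-0` exists exactly when some ascent
`e (i-1) < e i` before the last position starts at a nonzero value. Dropping the final `0`,
we count inversion sequences `u` of length `m` all of whose ascents start at `0`. Cutting `u`
at its last zero gives `u = u' ++ 0 :: r`, where `u'` is such a sequence of some length `k ≤ m`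
and `r` is a weakly decreasing sequence of `m - k` positive entries at most `k + 1`; there are
`multichoose (k + 1) (m - k) = choose m k` such `r`. So the counts satisfy the Bell recurrence.
-/

open Finset

def IsInvSeqFrom : ℕ → List ℕ → Prop
  | _, [] => True
  | k, a :: l => a ≤ k ∧ IsInvSeqFrom (k + 1) l

theorem isInvSeqFrom_iff : ∀ (k : ℕ) (l : List ℕ),
    IsInvSeqFrom k l ↔ ∀ i < l.length, l.getD i 0 ≤ k + i
  | k, [] => by simp [IsInvSeqFrom]
  | k, a :: l => by
    rw [IsInvSeqFrom, isInvSeqFrom_iff (k + 1) l, List.length_cons, Nat.forall_lt_succ_left]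
    simp [add_assoc, add_comm 1]

theorem isInvSeq_iff_isInvSeqFrom_zero (e : List ℕ) : IsInvSeq e ↔ IsInvSeqFrom 0 e := by
  simp [IsInvSeq, isInvSeqFrom_iff]

theorem isInvSeqFrom_append : ∀ (k : ℕ) (l₁ l₂ : List ℕ),
    IsInvSeqFrom k (l₁ ++ l₂) ↔ IsInvSeqFrom k l₁ ∧ IsInvSeqFrom (k + l₁.length) l₂
  | k, [], l₂ => by simp [IsInvSeqFrom]
  | k, a :: l₁, l₂ => by
    simp [IsInvSeqFrom, isInvSeqFrom_append (k + 1) l₁ l₂, and_assoc, add_assoc, add_comm 1]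

theorem isInvSeqFrom_iff_forall_le {k : ℕ} {l : List ℕ} (hl : l.Pairwise (· ≥ ·)) :
    IsInvSeqFrom k l ↔ ∀ x ∈ l, x ≤ k := by
  induction l generalizing k with
  | nil => simp [IsInvSeqFrom]
  | cons a l ih =>
    rw [List.pairwise_cons] at hl
    rw [IsInvSeqFrom, ih hl.2, List.forall_mem_cons]
    constructor
    · rintro ⟨ha, -⟩; exact ⟨ha, fun x hx => (hl.1 x hx).trans ha⟩
    · rintro ⟨ha, hl'⟩; exact ⟨ha, fun x hx => (hl' x hx).trans k.le_succ⟩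

theorem isInvSeq_append_singleton (u : List ℕ) (x : ℕ) :
    IsInvSeq (u ++ [x]) ↔ IsInvSeq u ∧ x ≤ u.length := by
  simp [isInvSeq_iff_isInvSeqFrom_zero, isInvSeqFrom_append, IsInvSeqFrom]

def invSeqs : ℕ → Finset (List ℕ)
  | 0 => {[]}
  | n + 1 => (invSeqs n ×ˢ range (n + 1)).image fun q => q.1 ++ [q.2]

theorem mem_invSeqs {n : ℕ} {e : List ℕ} : e ∈ invSeqs n ↔ e.length = n ∧ IsInvSeq e := by
  induction n generalizing e with
  | zero => simp +contextual [invSeqs, IsInvSeq]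
  | succ n ih =>
    simp only [invSeqs, mem_image, mem_product, ih, mem_range, Prod.exists]
    constructor
    · rintro ⟨u, x, ⟨⟨hu, hinv⟩, hx⟩, rfl⟩
      exact ⟨by simp [hu], (isInvSeq_append_singleton u x).2 ⟨hinv, by omega⟩⟩
    · rintro ⟨hlen, hinv⟩
      obtain ⟨u, x, rfl⟩ := e.eq_nil_or_concat'.resolve_left (by rintro rfl; simp at hlen)
      rw [isInvSeq_append_singleton] at hinv
      simp only [List.length_append, List.length_singleton] at hlen
      exact ⟨u, x, ⟨⟨by omega, hinv.1⟩, by omega⟩, rfl⟩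

def AscentsAtZero (e : List ℕ) : Prop := e.IsChain fun a b => a < b → a = 0

theorem avoids120_append_zero_iff (u : List ℕ) : Avoids120 (u ++ [0]) ↔ AscentsAtZero u := by
  have hget : ∀ i (hi : i < u.length), (u ++ [0]).getD i 0 = u[i] := fun i hi => by
    simp [List.getD_eq_getElem?_getD, List.getElem?_append_left hi, hi]
  have hlast : (u ++ [0]).getD u.length 0 = 0 := by simp [List.getD_eq_getElem?_getD]
  rw [Avoids120, AscentsAtZero, List.isChain_iff_getElem]
  constructor
  · intro h i hi hasc
    by_contra hne
    refine h ⟨i + 1, u.length, by omega, hi, by simp, ?_, ?_⟩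
    · rw [hlast, Nat.add_sub_cancel, hget i (by omega)]; omega
    · rwa [Nat.add_sub_cancel, hget i (by omega), hget (i + 1) hi]
  · rintro h ⟨i, j, hi, hij, hj, hji, hasc⟩
    simp only [List.length_append, List.length_singleton] at hj
    rw [hget (i - 1) (by omega), hget i (by omega)] at hasc
    rw [hget (i - 1) (by omega)] at hji
    have := h (i - 1) (by omega)
    simp only [Nat.sub_add_cancel hi] at this
    omega

theorem ascentsAtZero_append_zero_cons (u r : List ℕ) :
    AscentsAtZero (u ++ 0 :: r) ↔ AscentsAtZero u ∧ AscentsAtZero r := by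
  simp [AscentsAtZero, List.isChain_append, List.isChain_cons]

theorem ascentsAtZero_iff_pairwise {r : List ℕ} (hr : ∀ x ∈ r, 0 < x) :
    AscentsAtZero r ↔ r.Pairwise (· ≥ ·) := by
  rw [AscentsAtZero, ← List.isChain_iff_pairwise]
  refine List.IsChain.iff_of_mem_imp fun a b ha _ => ?_
  have := hr a ha
  constructor <;> intro h <;> omega

def decSeqs : ℕ → ℕ → Finset (List ℕ)
  | _, 0 => {[]}
  | v, ℓ + 1 => (range v).biUnion fun x => (decSeqs (x + 1) ℓ).image (List.cons (x + 1))

theorem mem_decSeqs {v ℓ : ℕ} {r : List ℕ} :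
    r ∈ decSeqs v ℓ ↔ r.length = ℓ ∧ r.Pairwise (· ≥ ·) ∧ ∀ x ∈ r, 0 < x ∧ x ≤ v := by
  induction ℓ generalizing v r with
  | zero => simp +contextual [decSeqs, List.length_eq_zero_iff]
  | succ ℓ ih =>
    cases r with
    | nil => simp [decSeqs]
    | cons a r =>
      simp only [decSeqs, mem_biUnion, mem_range, mem_image, ih, List.cons.injEq]
      constructor
      · rintro ⟨x, hx, r', ⟨hlen, hsort, hbound⟩, rfl, rfl⟩
        simp only [List.length_cons, List.pairwise_cons, List.mem_cons, forall_eq_or_imp]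
        exact ⟨by omega, ⟨fun y hy => (hbound y hy).2, hsort⟩, ⟨by omega, by omega⟩,
          fun y hy => ⟨(hbound y hy).1, by have := (hbound y hy).2; omega⟩⟩
      · simp only [List.length_cons, List.pairwise_cons, List.mem_cons, forall_eq_or_imp]
        rintro ⟨hlen, ⟨hle, hsort⟩, ⟨ha, hav⟩, hbound⟩
        exact ⟨a - 1, by omega, r, ⟨by omega, hsort, fun y hy => ⟨(hbound y hy).1, by
          have := hle y hy; omega⟩⟩, by omega, rfl⟩

theorem sum_range_multichoose_succ (v ℓ : ℕ) :
    ∑ x ∈ range v, (x + 1).multichoose ℓ = v.multichoose (ℓ + 1) := by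
  induction v with
  | zero => simp
  | succ v ih => rw [sum_range_succ, ih, Nat.multichoose_succ_succ]

theorem card_decSeqs (v ℓ : ℕ) : #(decSeqs v ℓ) = v.multichoose ℓ := by
  induction ℓ generalizing v with
  | zero => simp [decSeqs]
  | succ ℓ ih =>
    rw [decSeqs, card_biUnion, ← sum_range_multichoose_succ]
    · exact sum_congr rfl fun x _ => by rw [card_image_of_injective _ List.cons_injective, ih]
    · intro x _ y _ hxy
      simp only [Function.onFun, disjoint_left, mem_image]
      rintro _ ⟨r, -, rfl⟩ ⟨r', -, h⟩
      exact hxy (by simpa using (List.cons_eq_cons.mp h).1.symm)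

theorem exists_eq_append_zero_cons {e : List ℕ} (he : 0 ∈ e) :
    ∃ u r, e = u ++ 0 :: r ∧ ∀ x ∈ r, 0 < x := by
  induction e using List.reverseRecOn with
  | nil => simp at he
  | append_singleton e a ih =>
    rcases Nat.eq_zero_or_pos a with rfl | ha
    · exact ⟨e, [], rfl, by simp⟩
    · obtain ⟨u, r, rfl, hr⟩ := ih (by simpa [ha.ne] using he)
      exact ⟨u, r ++ [a], by simp, by simpa [or_imp, forall_and, ha] using hr⟩

theorem eq_nil_of_zero_cons_eq_append_zero_cons {a r r' : List ℕ} (hr : ∀ x ∈ r, 0 < x)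
    (h : 0 :: r = a ++ 0 :: r') : a = [] := by
  cases a with
  | nil => rfl
  | cons b a =>
    obtain ⟨-, rfl⟩ := List.cons_eq_cons.mp h
    exact absurd (hr 0 (by simp)) (lt_irrefl 0)

theorem append_zero_cons_inj {u u' r r' : List ℕ} (hr : ∀ x ∈ r, 0 < x) (hr' : ∀ x ∈ r', 0 < x)
    (h : u ++ 0 :: r = u' ++ 0 :: r') : u = u' ∧ r = r' := by
  rcases List.append_eq_append_iff.mp h with ⟨a, rfl, hsplit⟩ | ⟨a, rfl, hsplit⟩
  · obtain rfl := eq_nil_of_zero_cons_eq_append_zero_cons hr hsplit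
    simpa using hsplit
  · obtain rfl := eq_nil_of_zero_cons_eq_append_zero_cons hr' hsplit
    simpa using hsplit.symm

theorem IsInvSeq.zero_mem {e : List ℕ} (he : IsInvSeq e) (hne : e ≠ []) : 0 ∈ e := by
  obtain ⟨a, l, rfl⟩ := List.exists_cons_of_ne_nil hne
  rw [isInvSeq_iff_isInvSeqFrom_zero, IsInvSeqFrom, Nat.le_zero] at he
  simp [he.1]

theorem isInvSeq_and_ascentsAtZero_append_zero_cons_iff {u r : List ℕ} (hr : ∀ x ∈ r, 0 < x) :
    (IsInvSeq (u ++ 0 :: r) ∧ AscentsAtZero (u ++ 0 :: r)) ↔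
      (IsInvSeq u ∧ AscentsAtZero u) ∧ r.Pairwise (· ≥ ·) ∧ ∀ x ∈ r, x ≤ u.length + 1 := by
  simp only [isInvSeq_iff_isInvSeqFrom_zero, isInvSeqFrom_append, IsInvSeqFrom,
    ascentsAtZero_append_zero_cons, ascentsAtZero_iff_pairwise hr, zero_add, zero_le, true_and]
  constructor
  · rintro ⟨⟨hu, hr'⟩, hua, hsort⟩
    exact ⟨⟨hu, hua⟩, hsort, (isInvSeqFrom_iff_forall_le hsort).1 hr'⟩
  · rintro ⟨⟨hu, hua⟩, hsort, hbound⟩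
    exact ⟨⟨hu, (isInvSeqFrom_iff_forall_le hsort).2 hbound⟩, hua, hsort⟩

noncomputable def zeroAscInvSeqs (m : ℕ) : Finset (List ℕ) := (invSeqs m).filter AscentsAtZero

theorem mem_zeroAscInvSeqs {m : ℕ} {e : List ℕ} :
    e ∈ zeroAscInvSeqs m ↔ e.length = m ∧ IsInvSeq e ∧ AscentsAtZero e := by
  rw [zeroAscInvSeqs, mem_filter, mem_invSeqs, and_assoc]

theorem zeroAscInvSeqs_succ (m : ℕ) :
    zeroAscInvSeqs (m + 1) = (range (m + 1)).biUnion fun k =>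
      (zeroAscInvSeqs k ×ˢ decSeqs (k + 1) (m - k)).image fun q => q.1 ++ 0 :: q.2 := by
  ext e
  simp only [mem_zeroAscInvSeqs, mem_biUnion, mem_range, mem_image, mem_product, Prod.exists,
    mem_decSeqs]
  constructor
  · rintro ⟨hlen, hinv, hasc⟩
    obtain ⟨u, r, rfl, hr⟩ :=
      exists_eq_append_zero_cons (hinv.zero_mem (by rintro rfl; simp at hlen))
    obtain ⟨hu, hsort, hbound⟩ :=
      (isInvSeq_and_ascentsAtZero_append_zero_cons_iff hr).1 ⟨hinv, hasc⟩
    simp only [List.length_append, List.length_cons] at hlen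
    exact ⟨u.length, by omega, u, r, ⟨⟨rfl, hu⟩, by omega, hsort,
      fun x hx => ⟨hr x hx, hbound x hx⟩⟩, rfl⟩
  · rintro ⟨k, hk, u, r, ⟨⟨rfl, hu⟩, hrlen, hsort, hbound⟩, rfl⟩
    refine ⟨by simp; omega, ?_⟩
    exact (isInvSeq_and_ascentsAtZero_append_zero_cons_iff fun x hx => (hbound x hx).1).2
      ⟨hu, hsort, fun x hx => (hbound x hx).2⟩

theorem card_zeroAscInvSeqs_succ (m : ℕ) :
    #(zeroAscInvSeqs (m + 1)) = ∑ k ∈ range (m + 1), m.choose k * #(zeroAscInvSeqs k) := by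
  have hpos : ∀ {v ℓ r}, r ∈ decSeqs v ℓ → ∀ x ∈ r, 0 < x :=
    fun hr x hx => ((mem_decSeqs.1 hr).2.2 x hx).1
  rw [zeroAscInvSeqs_succ, card_biUnion]
  · refine sum_congr rfl fun k hk => ?_
    rw [card_image_of_injOn, card_product, card_decSeqs, Nat.multichoose_eq, mul_comm,
      show k + 1 + (m - k) - 1 = m by simp at hk; omega, Nat.choose_symm (by simp at hk; omega)]
    rintro ⟨u, r⟩ hq ⟨u', r'⟩ hq' h
    simp only [coe_product, Set.mem_prod, mem_coe] at hq hq'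
    obtain ⟨rfl, rfl⟩ := append_zero_cons_inj (hpos hq.2) (hpos hq'.2) h
    rfl
  · intro k _ k' _ hkk'
    simp only [Function.onFun, disjoint_left, mem_image, mem_product, Prod.exists]
    rintro _ ⟨u, r, ⟨hu, hr⟩, rfl⟩ ⟨u', r', ⟨hu', hr'⟩, h⟩
    obtain ⟨rfl, -⟩ := append_zero_cons_inj (hpos hr') (hpos hr) h
    exact hkk' ((mem_zeroAscInvSeqs.1 hu).1.symm.trans (mem_zeroAscInvSeqs.1 hu').1)

theorem card_zeroAscInvSeqs (B : ℕ → ℕ) (hB0 : B 0 = 1)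
    (hBrec : ∀ m, B (m + 1) = ∑ j ∈ range (m + 1), m.choose j * B j) (m : ℕ) :
    #(zeroAscInvSeqs m) = B m := by
  induction m using Nat.strong_induction_on with
  | _ m ih =>
    cases m with
    | zero => rw [zeroAscInvSeqs, invSeqs, filter_singleton, if_pos .nil, card_singleton, hB0]
    | succ m =>
      rw [card_zeroAscInvSeqs_succ, hBrec]
      exact sum_congr rfl fun k hk => by rw [ih k (by simp at hk; omega)]

theorem setOf_isInvSeq_avoids120_eq_image (m : ℕ) :
    {e : List ℕ | e.length = m + 1 ∧ IsInvSeq e ∧ Avoids120 e ∧ e.getD (e.length - 1) 0 = 0} =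
      (· ++ [0]) '' ↑(zeroAscInvSeqs m) := by
  ext e
  simp only [Set.mem_ofPred_eq, Set.mem_image, mem_coe, mem_zeroAscInvSeqs]
  constructor
  · rintro ⟨hlen, hinv, hav, hlast⟩
    obtain ⟨u, x, rfl⟩ := e.eq_nil_or_concat'.resolve_left (by rintro rfl; simp at hlen)
    obtain rfl : x = 0 := by simpa using hlast
    rw [isInvSeq_append_singleton] at hinv
    exact ⟨u, ⟨by simpa using hlen, hinv.1, (avoids120_append_zero_iff u).1 hav⟩, rfl⟩
  · rintro ⟨u, ⟨hlen, hinv, hasc⟩, rfl⟩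
    exact ⟨by simp [hlen], (isInvSeq_append_singleton u 0).2 ⟨hinv, Nat.zero_le _⟩,
      (avoids120_append_zero_iff u).2 hasc, by simp⟩

theorem stmt16_general (B : ℕ → ℕ) (hB0 : B 0 = 1)
    (hBrec : ∀ m, B (m + 1) = ∑ j ∈ Finset.range (m + 1), Nat.choose m j * B j)
    (n : ℕ) :
    {e : List ℕ | e.length = n ∧ IsInvSeq e ∧ Avoids120 e ∧
        e.getD (e.length - 1) 0 = 0}.ncard = B (n - 1) := by
  cases n with
  | zero =>
    -- The empty list qualifies (its last entry is the default `0`), and `B (0 - 1) = B 0`.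
    have hempty : {e : List ℕ | e.length = 0 ∧ IsInvSeq e ∧ Avoids120 e ∧
        e.getD (e.length - 1) 0 = 0} = {[]} := by
      ext e
      simp +contextual [List.length_eq_zero_iff, IsInvSeq, Avoids120]
    rw [hempty, Set.ncard_singleton, Nat.zero_sub, hB0]
  | succ m =>
    rw [setOf_isInvSeq_avoids120_eq_image,
      Set.ncard_image_of_injective _ (List.append_left_injective _), Set.ncard_coe_finset,
      card_zeroAscInvSeqs B hB0 hBrec, Nat.add_sub_cancel]

theorem stmt16 (B : ℕ → ℕ) (hB0 : B 0 = 1)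
    (hBrec : ∀ m, B (m + 1) = ∑ j ∈ Finset.range (m + 1), Nat.choose m j * B j)
    (n : ℕ) (hn : 1 ≤ n) :
    {e : List ℕ | e.length = n ∧ IsInvSeq e ∧ Avoids120 e ∧
        e.getD (e.length - 1) 0 = 0}.ncard = B (n - 1) :=
  stmt16_general B hB0 hBrec n
end

section
/- For each k ≥ 1, the sum Σ_{e} x^{len(e) − k − 1} over all 1̲2̲0-avoiding primitive ascent sequences e with k ascents, evaluated at x = 1, equals 2^{binomial(k+1,2)}; in particular, the number of 1̲2̲0-avoiding primitive ascent sequences with k ascents is 2^{k(k+1)/2}. -/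
open scoped Classical

/-!
Cut a primitive `1̲2̲0`-avoiding ascent sequence with `k + 1` ascents right after its last ascent:
the prefix `x` is such a sequence with `k` ascents, the suffix `y` is strictly decreasing, and
`last x < head y ≤ k + 1`, `last x ≤ last y`. Conversely, appending such a run to such an `x` gives
a sequence of the same kind with `k + 1` ascents, and the cut is unique. The condition
`last x ≤ last y` is all that `1̲2̲0`-avoidance asks, because avoidance already forces every ascent
bottom of `x` to be at most `last x`. A run ending in `b` is `b` preceded by a
subset of `[b + 1, k + 1]`, so the number `N(k, b)` of sequences with `k` ascents ending in `b`
satisfies `N(k+1, b) = 2^(k+1-b) ∑_{b' < b} N(k, b') + (2^(k+1-b) - 1) N(k, b)`. This is solved by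
`N(k, b) = 2^C(b,2) ∏_{m=b+1}^{k} (2^m - 1)`, whose sum over `b ≤ k` is `2^C(k+1,2)`.
-/

open Finset

section PairwiseGt

variable {l : List ℕ}

lemma getLastD_eq_getD (l : List ℕ) : l.getLastD 0 = l.getD (l.length - 1) 0 := by
  simp [List.getLastD_eq_getLast?, List.getLast?_eq_getElem?]

lemma headD_eq_getD (l : List ℕ) : l.headD 0 = l.getD 0 0 := by
  cases l <;> rfl

lemma getLastD_append_of_ne_nil (x : List ℕ) {y : List ℕ} (hy : y ≠ []) :
    (x ++ y).getLastD 0 = y.getLastD 0 := by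
  simp [List.getLastD_eq_getLast?, List.getLast?_append, List.getLast?_eq_some_getLast hy]

lemma getD_lt_getD_of_pairwise_gt (hl : l.Pairwise (· > ·)) {i j : ℕ} (hij : i < j)
    (hj : j < l.length) : l.getD j 0 < l.getD i 0 := by
  rw [List.getD_eq_getElem _ _ hj, List.getD_eq_getElem _ _ (hij.trans hj)]
  exact List.pairwise_iff_getElem.1 hl i j _ hj hij

lemma getD_le_getD_of_pairwise_gt (hl : l.Pairwise (· > ·)) {i j : ℕ} (hij : i ≤ j)
    (hj : j < l.length) : l.getD j 0 ≤ l.getD i 0 := by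
  rcases hij.eq_or_lt with rfl | h
  · exact le_rfl
  · exact (getD_lt_getD_of_pairwise_gt hl h hj).le

lemma pairwise_gt_of_getD_succ_lt
    (h : ∀ i, i + 1 < l.length → l.getD (i + 1) 0 < l.getD i 0) : l.Pairwise (· > ·) := by
  rw [← List.isChain_iff_pairwise, List.isChain_iff_getElem]
  intro i hi
  have := h i hi
  rwa [List.getD_eq_getElem _ _ hi, List.getD_eq_getElem _ _ (Nat.lt_of_succ_lt hi)] at this

lemma le_headD_of_pairwise_gt (hl : l.Pairwise (· > ·)) {v : ℕ} (hv : v ∈ l) :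
    v ≤ l.headD 0 := by
  cases l with
  | nil => simp at hv
  | cons a l =>
    rcases List.mem_cons.1 hv with rfl | hv
    · exact le_rfl
    · exact ((List.pairwise_cons.1 hl).1 v hv).le

lemma getLastD_lt_of_mem_dropLast (hl : l.Pairwise (· > ·)) {v : ℕ} (hv : v ∈ l.dropLast) :
    l.getLastD 0 < v := by
  have hl0 : l ≠ [] := by rintro rfl; simp at hv
  rw [← List.dropLast_append_getLast hl0, List.pairwise_append] at hl
  rw [List.getLastD_eq_getLast?, List.getLast?_eq_some_getLast hl0]
  exact hl.2.2 v hv _ (List.mem_singleton_self _)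

end PairwiseGt

section Ascents

lemma ascents_eq_card (e : List ℕ) :
    ascents e = #{i ∈ range (e.length - 1) | e.getD i 0 < e.getD (i + 1) 0} := rfl

lemma ascents_le_length_sub_one (e : List ℕ) : ascents e ≤ e.length - 1 :=
  (card_filter_le _ _).trans (card_range _).le

lemma ascents_pos {e : List ℕ} {i : ℕ} (hi : i + 1 < e.length)
    (h : e.getD i 0 < e.getD (i + 1) 0) : 0 < ascents e :=
  card_pos.2 ⟨i, mem_filter.2 ⟨mem_range.2 (by omega), h⟩⟩

lemma ascents_take (e : List ℕ) {m : ℕ} (hm : m ≤ e.length) :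
    ascents (e.take m) = #{i ∈ range (m - 1) | e.getD i 0 < e.getD (i + 1) 0} := by
  rw [ascents_eq_card, List.length_take, min_eq_left hm]
  refine congrArg card (filter_congr fun i hi => ?_)
  have hi : i + 1 < m := by rw [mem_range] at hi; omega
  simp [hi, Nat.lt_of_succ_lt hi]

lemma ascents_le_ascents_append (x y : List ℕ) : ascents x ≤ ascents (x ++ y) := by
  rw [ascents_eq_card, ascents_eq_card]
  refine card_le_card fun i hi => ?_
  simp only [mem_filter, mem_range, List.length_append] at hi ⊢
  refine ⟨by omega, ?_⟩
  rw [List.getD_append _ _ _ _ (by omega), List.getD_append _ _ _ _ (by omega)]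
  exact hi.2

lemma ascents_append_of_pairwise_gt {x y : List ℕ} (hx : x ≠ []) (hy : y.Pairwise (· > ·))
    (hxy : x.getLastD 0 < y.headD 0) : ascents (x ++ y) = ascents x + 1 := by
  have hx0 : 0 < x.length := List.length_pos_iff.2 hx
  have hy0 : 0 < y.length := List.length_pos_iff.2 (by rintro rfl; simp at hxy)
  rw [getLastD_eq_getD, headD_eq_getD] at hxy
  rw [ascents_eq_card, ascents_eq_card, ← card_insert_of_notMem (a := x.length - 1)]
  · congr 1
    ext i
    simp only [mem_filter, mem_range, mem_insert, List.length_append]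
    rcases lt_trichotomy (i + 1) x.length with h | h | h
    · rw [List.getD_append _ _ _ _ h, List.getD_append _ _ _ _ (by omega)]
      omega
    · obtain rfl : i = x.length - 1 := by omega
      rw [List.getD_append _ _ _ _ (by omega), List.getD_append_right _ _ _ _ (by omega),
        show x.length - 1 + 1 - x.length = 0 by omega]
      omega
    · refine iff_of_false (fun ⟨hi, hasc⟩ => ?_) (by omega)
      rw [List.getD_append_right _ _ _ _ (by omega),
        List.getD_append_right _ _ _ _ (by omega)] at hasc
      exact lt_asymm hasc (getD_lt_getD_of_pairwise_gt hy
        (show i - x.length < i + 1 - x.length by omega) (by omega))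
  · simp

end Ascents

section Prefixes

variable {e : List ℕ}

lemma getD_take_of_lt (e : List ℕ) {m i : ℕ} (h : i < m) : (e.take m).getD i 0 = e.getD i 0 := by
  simp [h]

lemma getD_drop (e : List ℕ) (m i : ℕ) : (e.drop m).getD i 0 = e.getD (m + i) 0 := by
  simp

lemma getLastD_drop_of_lt {m : ℕ} (h : m < e.length) : (e.drop m).getLastD 0 = e.getLastD 0 := by
  simp [List.getLastD_eq_getLast?, List.getLast?_drop, h.not_ge]

lemma IsAscSeq.take (he : IsAscSeq e) (m : ℕ) : IsAscSeq (e.take m) := by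
  refine ⟨fun i hi => ?_, fun i hi => ?_⟩ <;> rw [List.length_take, lt_min_iff] at hi
  · simpa [hi.1] using he.1 i hi.2
  · simpa [hi.1, Nat.lt_of_succ_lt hi.1, List.take_take, hi.1.le] using he.2 i hi.2

lemma IsPrimitive.take (he : IsPrimitive e) (m : ℕ) : IsPrimitive (e.take m) := by
  intro i hi
  rw [List.length_take, lt_min_iff] at hi
  simpa [hi.1, Nat.lt_of_succ_lt hi.1] using he i hi.2

lemma Avoids120.take (he : Avoids120 e) (m : ℕ) : Avoids120 (e.take m) := by
  rintro ⟨i, j, hi, hij, hj, hji, hii⟩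
  rw [List.length_take, lt_min_iff] at hj
  rw [getD_take_of_lt e hj.1, getD_take_of_lt e (by omega)] at hji
  rw [getD_take_of_lt e (by omega), getD_take_of_lt e (by omega)] at hii
  exact he ⟨i, j, hi, hij, hj.2, hji, hii⟩

end Prefixes

def IsPrimAsc120 (e : List ℕ) : Prop := IsAscSeq e ∧ IsPrimitive e ∧ Avoids120 e

lemma IsPrimAsc120.take {e : List ℕ} (he : IsPrimAsc120 e) (m : ℕ) : IsPrimAsc120 (e.take m) :=
  ⟨he.1.take m, he.2.1.take m, he.2.2.take m⟩

lemma Avoids120.getD_le_getLastD {x : List ℕ} (hx : Avoids120 x) {i : ℕ} (hi : i + 1 < x.length)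
    (hasc : x.getD i 0 < x.getD (i + 1) 0) : x.getD i 0 ≤ x.getLastD 0 := by
  rw [getLastD_eq_getD]
  rcases (show i + 1 ≤ x.length - 1 by omega).eq_or_lt with h | h
  · rw [← h]
    exact hasc.le
  · by_contra hc
    exact hx ⟨i + 1, x.length - 1, by omega, h, by omega, by simpa using hc, by simpa using hasc⟩

section Append

variable {x y : List ℕ}

lemma IsAscSeq.append_of_pairwise_gt (hx : IsAscSeq x) (hx0 : x ≠ []) (hy : y.Pairwise (· > ·))
    (hyx : y.headD 0 ≤ ascents x + 1) : IsAscSeq (x ++ y) := by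
  have hlen : ascents x + 1 ≤ x.length := by
    have := ascents_le_length_sub_one x
    have := List.length_pos_iff.2 hx0
    omega
  have hy_le : ∀ j < y.length, y.getD j 0 ≤ ascents x + 1 := fun j hj =>
    (getD_le_getD_of_pairwise_gt hy (Nat.zero_le j) hj).trans (headD_eq_getD y ▸ hyx)
  refine ⟨fun i hi => ?_, fun i hi => ?_⟩ <;> rw [List.length_append] at hi
  · rcases Nat.lt_or_ge i x.length with h | h
    · rw [List.getD_append _ _ _ _ h]
      exact hx.1 i h
    · rw [List.getD_append_right _ _ _ _ h]
      have := hy_le (i - x.length) (by omega)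
      omega
  · rcases Nat.lt_or_ge (i + 1) x.length with h | h
    · rw [List.getD_append _ _ _ _ h, List.take_append_of_le_length h.le]
      exact hx.2 i h
    · have := ascents_le_ascents_append x (y.take (i + 1 - x.length))
      rw [List.getD_append_right _ _ _ _ h, List.take_append, List.take_of_length_le (by omega)]
      have := hy_le (i + 1 - x.length) (by omega)
      omega

lemma IsPrimitive.append_of_pairwise_gt (hx : IsPrimitive x) (hy : y.Pairwise (· > ·))
    (hxy : x.getLastD 0 < y.headD 0) : IsPrimitive (x ++ y) := by
  rw [getLastD_eq_getD, headD_eq_getD] at hxy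
  intro i hi
  rw [List.length_append] at hi
  rcases lt_trichotomy (i + 1) x.length with h | h | h
  · rw [List.getD_append _ _ _ _ (by omega), List.getD_append _ _ _ _ h]
    exact hx i h
  · obtain rfl : i = x.length - 1 := by omega
    rw [List.getD_append _ _ _ _ (by omega), List.getD_append_right _ _ _ _ (by omega),
      show x.length - 1 + 1 - x.length = 0 by omega]
    exact hxy.ne
  · rw [List.getD_append_right _ _ _ _ (by omega), List.getD_append_right _ _ _ _ (by omega)]
    exact (getD_lt_getD_of_pairwise_gt hy
      (show i - x.length < i + 1 - x.length by omega) (by omega)).ne'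

lemma Avoids120.append_of_pairwise_gt (hx : Avoids120 x) (hy : y.Pairwise (· > ·))
    (hxy : x.getLastD 0 ≤ y.getLastD 0) : Avoids120 (x ++ y) := by
  have hy_ge : ∀ j < y.length, x.getLastD 0 ≤ y.getD j 0 := fun j hj =>
    hxy.trans (getLastD_eq_getD y ▸ getD_le_getD_of_pairwise_gt hy (by omega) (by omega))
  rintro ⟨i, j, hi, hij, hj, hji, hii⟩
  rw [List.length_append] at hj
  rcases lt_trichotomy i x.length with h | rfl | h
  · rw [List.getD_append _ _ _ _ (by omega), List.getD_append _ _ _ _ h] at hii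
    rw [List.getD_append x y 0 (i - 1) (by omega)] at hji
    rcases Nat.lt_or_ge j x.length with hjx | hjx
    · rw [List.getD_append _ _ _ _ hjx] at hji
      exact hx ⟨i, j, hi, hij, hjx, hji, hii⟩
    · rw [List.getD_append_right _ _ _ _ hjx] at hji
      have := hx.getD_le_getLastD (i := i - 1) (by omega) (by rwa [Nat.sub_add_cancel hi])
      have := hy_ge (j - x.length) (by omega)
      omega
  · rw [List.getD_append_right _ _ _ _ hij.le, List.getD_append _ _ _ _ (by omega),
      ← getLastD_eq_getD] at hji
    have := hy_ge (j - x.length) (by omega)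
    omega
  · rw [List.getD_append_right _ _ _ _ (by omega), List.getD_append_right _ _ _ _ h.le] at hii
    exact lt_asymm hii (getD_lt_getD_of_pairwise_gt hy
      (show i - 1 - x.length < i - x.length by omega) (by omega))

/-- The run `y` may follow a sequence `x` with `k` ascents (`IsPrimAsc120.append`). -/
structure IsAdmissibleRun (k : ℕ) (x y : List ℕ) : Prop where
  pairwise : y.Pairwise (· > ·)
  getLastD_lt_headD : x.getLastD 0 < y.headD 0
  headD_le : y.headD 0 ≤ k + 1
  getLastD_le_getLastD : x.getLastD 0 ≤ y.getLastD 0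

lemma IsAdmissibleRun.ne_nil {k : ℕ} (h : IsAdmissibleRun k x y) : y ≠ [] := by
  rintro rfl
  simpa using h.getLastD_lt_headD

lemma IsPrimAsc120.append {k : ℕ} (hx : IsPrimAsc120 x) (hx0 : x ≠ []) (hk : ascents x = k)
    (hy : IsAdmissibleRun k x y) : IsPrimAsc120 (x ++ y) ∧ ascents (x ++ y) = k + 1 := by
  subst hk
  exact ⟨⟨hx.1.append_of_pairwise_gt hx0 hy.pairwise hy.headD_le,
    hx.2.1.append_of_pairwise_gt hy.pairwise hy.getLastD_lt_headD,
    hx.2.2.append_of_pairwise_gt hy.pairwise hy.getLastD_le_getLastD⟩,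
    ascents_append_of_pairwise_gt hx0 hy.pairwise hy.getLastD_lt_headD⟩

end Append

section Decomposition

variable {e : List ℕ}

lemma exists_last_ascent {k : ℕ} (hk : ascents e = k + 1) :
    ∃ p, p + 1 < e.length ∧ e.getD p 0 < e.getD (p + 1) 0 ∧ ascents (e.take (p + 1)) = k ∧
      ∀ i, p < i → i + 1 < e.length → e.getD (i + 1) 0 ≤ e.getD i 0 := by
  rw [ascents_eq_card] at hk
  obtain ⟨p, hpT, hpmax⟩ : ∃ p ∈ {i ∈ range (e.length - 1) | e.getD i 0 < e.getD (i + 1) 0},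
      ∀ i ∈ {i ∈ range (e.length - 1) | e.getD i 0 < e.getD (i + 1) 0}, i ≤ p :=
    ⟨_, max'_mem _ (card_pos.1 (by omega)), fun i => le_max' _ i⟩
  simp only [mem_filter, mem_range] at hpT hpmax
  refine ⟨p, by omega, hpT.2, ?_, fun i hpi hi => ?_⟩
  · have hsplit : {i ∈ range (e.length - 1) | e.getD i 0 < e.getD (i + 1) 0}
        = insert p {i ∈ range p | e.getD i 0 < e.getD (i + 1) 0} := by
      ext i
      simp only [mem_filter, mem_range, mem_insert]
      constructor
      · rintro ⟨hi, hasc⟩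
        have := hpmax i ⟨hi, hasc⟩
        omega
      · rintro (rfl | ⟨hi, hasc⟩)
        · exact hpT
        · exact ⟨by omega, hasc⟩
    rw [hsplit, card_insert_of_notMem (by simp)] at hk
    rw [ascents_take e (by omega), Nat.add_sub_cancel]
    omega
  · by_contra hasc
    have := hpmax i ⟨by omega, by omega⟩
    omega

lemma IsPrimitive.pairwise_gt_drop (he : IsPrimitive e) {m : ℕ}
    (h : ∀ i, m ≤ i → i + 1 < e.length → e.getD (i + 1) 0 ≤ e.getD i 0) :
    (e.drop m).Pairwise (· > ·) := by
  refine pairwise_gt_of_getD_succ_lt fun i hi => ?_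
  rw [List.length_drop] at hi
  have hle := h (m + i) (by omega) (by omega)
  have hne := he (m + i) (by omega)
  rw [getD_drop, getD_drop, ← add_assoc]
  omega

/-- Cutting after the last ascent. -/
lemma IsPrimAsc120.exists_isAdmissibleRun (he : IsPrimAsc120 e) {k : ℕ}
    (hk : ascents e = k + 1) :
    ∃ m, 0 < m ∧ ascents (e.take m) = k ∧ IsAdmissibleRun k (e.take m) (e.drop m) := by
  obtain ⟨p, hp, hasc, htake, hafter⟩ := exists_last_ascent hk
  have hlast : (e.take (p + 1)).getLastD 0 = e.getD p 0 := by
    rw [getLastD_eq_getD, List.length_take, min_eq_left hp.le, Nat.add_sub_cancel,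
      getD_take_of_lt e p.lt_succ_self]
  have hhead : (e.drop (p + 1)).headD 0 = e.getD (p + 1) 0 := by
    rw [headD_eq_getD, getD_drop, add_zero]
  refine ⟨p + 1, p.succ_pos, htake,
    ⟨he.2.1.pairwise_gt_drop fun i hi => hafter i (by omega), ?_, ?_, ?_⟩⟩
  · rw [hlast, hhead]
    exact hasc
  · rw [hhead, ← htake]
    exact he.1.2 p hp
  · rw [hlast, getLastD_drop_of_lt hp]
    exact he.2.2.getD_le_getLastD hp hasc

end Decomposition

section Uniqueness

variable {x₁ y₁ x₂ y₂ : List ℕ}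

lemma length_le_of_append_eq_append (he : x₁ ++ y₁ = x₂ ++ y₂) (hy₁ : y₁.Pairwise (· > ·))
    (h₂ : x₂.getLastD 0 < y₂.headD 0) : x₂.length ≤ x₁.length := by
  by_contra! hlt
  have hy₂ : 0 < y₂.length := List.length_pos_iff.2 (by rintro rfl; simp at h₂)
  have hlen := congrArg List.length he
  rw [List.length_append, List.length_append] at hlen
  rw [getLastD_eq_getD, headD_eq_getD] at h₂
  have hasc : (x₂ ++ y₂).getD (x₂.length - 1) 0 < (x₂ ++ y₂).getD (x₂.length - 1 + 1) 0 := by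
    rwa [List.getD_append _ _ _ _ (by omega), List.getD_append_right _ _ _ _ (by omega),
      show x₂.length - 1 + 1 - x₂.length = 0 by omega]
  rw [← he, List.getD_append_right _ _ _ _ (by omega),
    List.getD_append_right _ _ _ _ (by omega)] at hasc
  exact lt_asymm hasc (getD_lt_getD_of_pairwise_gt hy₁
    (show x₂.length - 1 - x₁.length < x₂.length - 1 + 1 - x₁.length by omega) (by omega))

lemma append_inj_of_pairwise_gt (he : x₁ ++ y₁ = x₂ ++ y₂)
    (hy₁ : y₁.Pairwise (· > ·)) (hy₂ : y₂.Pairwise (· > ·))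
    (h₁ : x₁.getLastD 0 < y₁.headD 0) (h₂ : x₂.getLastD 0 < y₂.headD 0) :
    x₁ = x₂ ∧ y₁ = y₂ :=
  List.append_inj he <| le_antisymm (length_le_of_append_eq_append he.symm hy₂ h₁)
    (length_le_of_append_eq_append he hy₁ h₂)

end Uniqueness

section Runs

def run (A : Finset ℕ) (b : ℕ) : List ℕ := A.sort (· ≥ ·) ++ [b]

variable {A : Finset ℕ} {b : ℕ}

lemma run_empty (b : ℕ) : run ∅ b = [b] := by
  simp [run]

lemma getLastD_run : (run A b).getLastD 0 = b := by
  simp [run, List.getLastD_eq_getLast?]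

lemma pairwise_gt_run (hA : ∀ a ∈ A, b < a) : (run A b).Pairwise (· > ·) := by
  rw [run, List.pairwise_append]
  refine ⟨?_, List.pairwise_singleton _ _, fun a ha c hc => ?_⟩
  · exact (sortedGT_sort A).pairwise
  · rw [List.mem_singleton.1 hc]
    exact hA a ((mem_sort _).1 ha)

lemma headD_run_mem (hA : A.Nonempty) : (run A b).headD 0 ∈ A := by
  obtain ⟨a, l, hl⟩ := List.exists_cons_of_ne_nil
    (List.length_pos_iff.1 (by rw [length_sort]; exact hA.card_pos) :
      A.sort (· ≥ ·) ≠ [])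
  rw [run, hl, List.cons_append, List.headD_cons, ← mem_sort (· ≥ ·), hl]
  exact List.mem_cons_self

lemma run_injective (b : ℕ) : Function.Injective (run · b) := by
  intro A₁ A₂ h
  simp only [run, List.append_cancel_right_eq] at h
  rw [← A₁.sort_toFinset (· ≥ ·), h, sort_toFinset]

lemma run_dropLast_toFinset {y : List ℕ} (hy : y ≠ []) (hs : y.Pairwise (· > ·)) :
    run y.dropLast.toFinset (y.getLastD 0) = y := by
  have hd : y.dropLast.Pairwise (· > ·) := hs.sublist (List.dropLast_sublist y)
  rw [run, (List.toFinset_sort _ hd.nodup).2 (hd.imp le_of_lt), List.getLastD_eq_getLast?,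
    List.getLast?_eq_some_getLast hy, Option.getD_some, List.dropLast_append_getLast]

end Runs

section RunSets

/-- For `b' ≤ b`, `run A b` is an admissible run after a sequence with `k - 1` ascents ending in
`b'` iff `A ∈ runSets k b b'`; the run `[b]` needs `b' < b` to start with an ascent. -/
def runSets (k b b' : ℕ) : Finset (Finset ℕ) :=
  {A ∈ (Icc (b + 1) k).powerset | A = ∅ → b' < b ∧ b ≤ k}

variable {k b b' : ℕ}

lemma runSets_eq_empty (h : k < b) : runSets k b b' = ∅ := by
  ext A
  simp only [runSets, mem_filter, mem_powerset, Icc_eq_empty (show ¬b + 1 ≤ k by omega),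
    subset_empty, notMem_empty, iff_false, not_and]
  rintro rfl h'
  have := h' rfl
  omega

lemma card_runSets_of_lt (h : b' < b) (hb : b ≤ k) : #(runSets k b b') = 2 ^ (k - b) := by
  rw [runSets, filter_true_of_mem fun _ _ _ => ⟨h, hb⟩, card_powerset, Nat.card_Icc,
    Nat.add_sub_add_right]

lemma card_runSets_self (k b : ℕ) : #(runSets k b b) = 2 ^ (k - b) - 1 := by
  have : runSets k b b = (Icc (b + 1) k).powerset.erase ∅ := by
    ext A
    simp [runSets, and_comm]
  rw [this, card_erase_of_mem (empty_mem_powerset _), card_powerset, Nat.card_Icc,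
    Nat.add_sub_add_right]

lemma isAdmissibleRun_run {x : List ℕ} {A : Finset ℕ} (hxb : x.getLastD 0 ≤ b)
    (hA : A ∈ runSets (k + 1) b (x.getLastD 0)) : IsAdmissibleRun k x (run A b) := by
  rw [runSets, mem_filter, mem_powerset] at hA
  have hAIcc : ∀ a ∈ A, b < a ∧ a ≤ k + 1 := fun a ha => by
    have := mem_Icc.1 (hA.1 ha)
    omega
  refine ⟨pairwise_gt_run fun a ha => (hAIcc a ha).1, ?_, ?_, getLastD_run ▸ hxb⟩
  · rcases A.eq_empty_or_nonempty with rfl | hne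
    · simpa [run_empty] using (hA.2 rfl).1
    · exact hxb.trans_lt (hAIcc _ (headD_run_mem hne)).1
  · rcases A.eq_empty_or_nonempty with rfl | hne
    · simpa [run_empty] using (hA.2 rfl).2
    · exact (hAIcc _ (headD_run_mem hne)).2

lemma IsAdmissibleRun.exists_run {x y : List ℕ} (h : IsAdmissibleRun k x y) :
    ∃ A ∈ runSets (k + 1) (y.getLastD 0) (x.getLastD 0), run A (y.getLastD 0) = y := by
  refine ⟨y.dropLast.toFinset, ?_, run_dropLast_toFinset h.ne_nil h.pairwise⟩
  rw [runSets, mem_filter, mem_powerset]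
  refine ⟨fun a ha => ?_, fun hA => ?_⟩
  · rw [List.mem_toFinset] at ha
    have := getLastD_lt_of_mem_dropLast h.pairwise ha
    have := le_headD_of_pairwise_gt h.pairwise (List.mem_of_mem_dropLast ha)
    have := h.headD_le
    rw [mem_Icc]
    omega
  · have hy : y = [y.getLastD 0] := by
      rw [← run_empty, ← hA, run_dropLast_toFinset h.ne_nil h.pairwise]
    have h1 := h.getLastD_lt_headD
    have h2 := h.headD_le
    rw [hy, List.headD_cons] at h1 h2
    exact ⟨h1, h2⟩

end RunSets

section SeqCount

def seqCount (k b : ℕ) : ℕ := 2 ^ b.choose 2 * ∏ m ∈ Icc (b + 1) k, (2 ^ m - 1)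

lemma seqCount_self (k : ℕ) : seqCount k k = 2 ^ k.choose 2 := by
  simp [seqCount]

lemma seqCount_succ_left {k b : ℕ} (h : b ≤ k) :
    seqCount (k + 1) b = (2 ^ (k + 1) - 1) * seqCount k b := by
  rw [seqCount, seqCount, ← insert_Icc_right_eq_Icc_add_one (by omega),
    prod_insert (by simp), mul_left_comm]

lemma two_pow_mul_seqCount {k b : ℕ} (h : b + 1 ≤ k) :
    2 ^ b * seqCount k b = (2 ^ (b + 1) - 1) * seqCount k (b + 1) := by
  rw [seqCount, seqCount, ← insert_Icc_add_one_left_eq_Icc h, prod_insert (by simp),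
    Nat.choose_succ_succ', Nat.choose_one_right, pow_add]
  ring

lemma sum_seqCount {k b : ℕ} (h : b ≤ k) :
    ∑ b' ∈ range (b + 1), seqCount k b' = 2 ^ b * seqCount k b := by
  induction b with
  | zero => simp
  | succ b ih =>
    rw [sum_range_succ, ih (by omega), two_pow_mul_seqCount h]
    have : 1 ≤ 2 ^ (b + 1) := Nat.one_le_two_pow
    zify [this]
    ring

lemma sum_seqCount_self (k : ℕ) :
    ∑ b ∈ range (k + 1), seqCount k b = 2 ^ (k + 1).choose 2 := by
  rw [sum_seqCount le_rfl, seqCount_self, ← pow_add, Nat.choose_succ_succ', Nat.choose_one_right]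

/-- The recurrence of `card_seqsEndingAt_succ`: `2 ^ (k + 1 - b)` runs ending in `b` can follow
a sequence ending below `b`, one fewer can follow a sequence ending in `b`. -/
lemma seqCount_succ {k b : ℕ} (hb : b ≤ k + 1) :
    seqCount (k + 1) b = (∑ b' ∈ range b, seqCount k b') * 2 ^ (k + 1 - b) +
      seqCount k b * (2 ^ (k + 1 - b) - 1) := by
  rcases hb.eq_or_lt with rfl | hb
  · simp [sum_seqCount_self, seqCount_self]
  · have hsum := sum_seqCount (k := k) (b := b) (by omega)
    rw [sum_range_succ] at hsum
    have hpow : 2 ^ b * 2 ^ (k + 1 - b) = 2 ^ (k + 1) := by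
      rw [← pow_add, Nat.add_sub_cancel' hb.le]
    rw [seqCount_succ_left (by omega)]
    have h1 : 1 ≤ 2 ^ (k + 1) := Nat.one_le_two_pow
    have h2 : 1 ≤ 2 ^ (k + 1 - b) := Nat.one_le_two_pow
    zify [h1, h2] at hsum hpow ⊢
    linear_combination -(2 : ℤ) ^ (k + 1 - b) * hsum - (seqCount k b : ℤ) * hpow

end SeqCount

section Counting

lemma isPrimAsc120_singleton_zero : IsPrimAsc120 [0] :=
  ⟨⟨fun i hi => by simp, fun i hi => by simp at hi⟩, fun i hi => by simp at hi,
    fun ⟨i, j, _, hij, hj, _⟩ => by simp at hj; omega⟩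

lemma IsPrimAsc120.eq_singleton_zero {e : List ℕ} (he : IsPrimAsc120 e) (hk : ascents e = 0)
    (hne : e ≠ []) : e = [0] := by
  obtain ⟨a, l, rfl⟩ := List.exists_cons_of_ne_nil hne
  have ha : a = 0 := by simpa using he.1.1 0 (by simp)
  subst ha
  cases l with
  | nil => rfl
  | cons c l =>
    have hc : 0 ≠ c := by simpa using he.2.1 0 (by simp)
    have := ascents_pos (e := 0 :: c :: l) (i := 0) (by simp)
      (by simpa using Nat.pos_of_ne_zero hc.symm)
    omega

def seqsEndingAt : ℕ → ℕ → Finset (List ℕ)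
  | 0, b => if b = 0 then {[0]} else ∅
  | k + 1, b =>
    ((range (b + 1)).biUnion fun b' => seqsEndingAt k b' ×ˢ runSets (k + 1) b b').image
      fun p => p.1 ++ run p.2 b

lemma seqsEndingAt_eq_empty {k b : ℕ} (h : k < b) : seqsEndingAt k b = ∅ := by
  cases k with
  | zero => simp [seqsEndingAt, show b ≠ 0 by omega]
  | succ k =>
    ext e
    simp [seqsEndingAt, runSets_eq_empty h]

lemma mem_seqsEndingAt {k b : ℕ} {e : List ℕ} :
    e ∈ seqsEndingAt k b ↔ IsPrimAsc120 e ∧ ascents e = k ∧ e ≠ [] ∧ e.getLastD 0 = b := by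
  induction k generalizing b e with
  | zero =>
    constructor
    · intro he
      by_cases hb : b = 0
      · simp only [seqsEndingAt, hb, if_true, mem_singleton] at he
        subst he hb
        exact ⟨isPrimAsc120_singleton_zero, rfl, by simp, rfl⟩
      · simp [seqsEndingAt, hb] at he
    · rintro ⟨he, hk, hne, rfl⟩
      rw [he.eq_singleton_zero hk hne]
      simp [seqsEndingAt]
  | succ k ih =>
    simp only [seqsEndingAt, mem_image, mem_biUnion, mem_range, mem_product, Prod.exists]
    constructor
    · rintro ⟨w, A, ⟨b', hb', hw, hA⟩, rfl⟩
      obtain ⟨hwP, hwk, hw0, rfl⟩ := ih.1 hw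
      have hrun := isAdmissibleRun_run (by omega) hA
      exact ⟨(hwP.append hw0 hwk hrun).1, (hwP.append hw0 hwk hrun).2, by simp [hw0],
        (getLastD_append_of_ne_nil w hrun.ne_nil).trans getLastD_run⟩
    · rintro ⟨he, hk, hne, rfl⟩
      obtain ⟨m, hm, hxk, hrun⟩ := he.exists_isAdmissibleRun hk
      obtain ⟨A, hA, hAy⟩ := hrun.exists_run
      have hlast : (e.drop m).getLastD 0 = e.getLastD 0 :=
        getLastD_drop_of_lt (by simpa using hrun.ne_nil)
      rw [hlast] at hA hAy
      refine ⟨e.take m, A, ⟨_, ?_, ih.2 ⟨he.take m, hxk, by simp [hm.ne', hne], rfl⟩, hA⟩, ?_⟩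
      · exact Nat.lt_succ_of_le (hlast ▸ hrun.getLastD_le_getLastD)
      · rw [hAy, List.take_append_drop]

lemma card_seqsEndingAt_succ (k b : ℕ) : #(seqsEndingAt (k + 1) b) =
    ∑ b' ∈ range (b + 1), #(seqsEndingAt k b') * #(runSets (k + 1) b b') := by
  have hrun : ∀ {b' w A}, w ∈ seqsEndingAt k b' → b' ≤ b → A ∈ runSets (k + 1) b b' →
      IsAdmissibleRun k w (run A b) := fun hw hb' hA => by
    obtain ⟨-, -, -, rfl⟩ := mem_seqsEndingAt.1 hw
    exact isAdmissibleRun_run hb' hA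
  rw [seqsEndingAt, card_image_of_injOn, card_biUnion]
  · simp only [card_product]
  · intro b₁ _ b₂ _ hne
    refine disjoint_left.2 fun p hp₁ hp₂ => hne ?_
    rw [mem_product] at hp₁ hp₂
    rw [← (mem_seqsEndingAt.1 hp₁.1).2.2.2, (mem_seqsEndingAt.1 hp₂.1).2.2.2]
  · rintro ⟨w₁, A₁⟩ hp₁ ⟨w₂, A₂⟩ hp₂ he
    dsimp only at he
    simp only [coe_biUnion, coe_range, Set.mem_iUnion, Set.mem_Iio, coe_product,
      Set.mem_prod, mem_coe] at hp₁ hp₂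
    obtain ⟨b₁, hb₁, hw₁, hA₁⟩ := hp₁
    obtain ⟨b₂, hb₂, hw₂, hA₂⟩ := hp₂
    have hr₁ := hrun hw₁ (by omega) hA₁
    have hr₂ := hrun hw₂ (by omega) hA₂
    obtain ⟨rfl, hA⟩ := append_inj_of_pairwise_gt he hr₁.pairwise hr₂.pairwise
      hr₁.getLastD_lt_headD hr₂.getLastD_lt_headD
    rw [run_injective b hA]

lemma card_seqsEndingAt {k b : ℕ} (hb : b ≤ k) : #(seqsEndingAt k b) = seqCount k b := by
  induction k generalizing b with
  | zero =>
    obtain rfl : b = 0 := by omega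
    simp [seqsEndingAt, seqCount]
  | succ k ih =>
    rw [card_seqsEndingAt_succ, sum_range_succ, seqCount_succ hb, sum_mul, card_runSets_self]
    congr 1
    · refine sum_congr rfl fun b' hb' => ?_
      rw [mem_range] at hb'
      rw [ih (by omega), card_runSets_of_lt hb' hb]
    · rcases hb.eq_or_lt with rfl | hb
      · simp
      · rw [ih (by omega)]

def primAsc120Seqs (k : ℕ) : Finset (List ℕ) := (range (k + 1)).biUnion (seqsEndingAt k)

lemma mem_primAsc120Seqs {k : ℕ} (hk : 1 ≤ k) {e : List ℕ} :
    e ∈ primAsc120Seqs k ↔ IsPrimAsc120 e ∧ ascents e = k := by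
  simp only [primAsc120Seqs, mem_biUnion, mem_range, mem_seqsEndingAt]
  constructor
  · rintro ⟨b, -, he, hk, -⟩
    exact ⟨he, hk⟩
  · rintro ⟨he, rfl⟩
    have hne : e ≠ [] := by
      rintro rfl
      simp [ascents] at hk
    refine ⟨e.getLastD 0, ?_, he, rfl, hne, rfl⟩
    by_contra! hlt
    have := seqsEndingAt_eq_empty (Nat.lt_of_succ_le hlt) ▸
      mem_seqsEndingAt.2 ⟨he, rfl, hne, rfl⟩
    simp at this

lemma card_primAsc120Seqs (k : ℕ) : #(primAsc120Seqs k) = 2 ^ (k + 1).choose 2 := by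
  rw [primAsc120Seqs, card_biUnion, ← sum_seqCount_self]
  · exact sum_congr rfl fun b hb => card_seqsEndingAt (Nat.lt_succ_iff.1 (mem_range.1 hb))
  · intro b₁ _ b₂ _ hne
    refine disjoint_left.2 fun e he₁ he₂ => hne ?_
    rw [← (mem_seqsEndingAt.1 he₁).2.2.2, (mem_seqsEndingAt.1 he₂).2.2.2]

end Counting

theorem stmt18 (k : ℕ) (hk : 1 ≤ k) :
    (∃ S : Finset (List ℕ),
      (∀ e, e ∈ S ↔ IsAscSeq e ∧ IsPrimitive e ∧ Avoids120 e ∧ ascents e = k) ∧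
      ∑ e ∈ S, (1 : ℤ) ^ (e.length - k - 1) = 2 ^ (Nat.choose (k + 1) 2)) ∧
    {e : List ℕ | IsAscSeq e ∧ IsPrimitive e ∧ Avoids120 e ∧ ascents e = k}.ncard
      = 2 ^ (k * (k + 1) / 2) := by
  have hmem : ∀ e, e ∈ primAsc120Seqs k ↔
      IsAscSeq e ∧ IsPrimitive e ∧ Avoids120 e ∧ ascents e = k := fun e => by
    rw [mem_primAsc120Seqs hk, IsPrimAsc120, and_assoc, and_assoc]
  have hset : {e : List ℕ | IsAscSeq e ∧ IsPrimitive e ∧ Avoids120 e ∧ ascents e = k}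
      = primAsc120Seqs k := Set.ext fun e => (hmem e).symm
  refine ⟨⟨primAsc120Seqs k, hmem, ?_⟩, ?_⟩
  · simp [card_primAsc120Seqs]
  · rw [hset, Set.ncard_coe_finset, card_primAsc120Seqs, Nat.choose_two_right,
      Nat.add_sub_cancel, Nat.mul_comm]
end
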